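/- arXiv:2202.13342 — 9 statements merged into one kernel-verified Lean document; each statement's English description precedes it below -/
import Mathlib

section
/- The subspace 𝔏(0) = span{L_{pm} : m ∈ ℤ} ⊕ ℂC_0 is a Lie subalgebra of 𝔏, and for each 1 ≤ j ≤ p−1 the subspace 𝔏(j) = span{L_{j+pm} : m ∈ ℤ} ⊕ ℂC_{j̃}, where j̃ = min(j, p−j), is a Lie ideal of 𝔏. -/
/-- The gap-`p` Virasoro algebra structure on a complex Lie algebra `g`. -/
structure GapVirasoro (p : ℕ) (g : Type) [LieRing g] [LieAlgebra ℂ g] where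
  L : ℤ → g
  C : ℕ → g
  basis : Module.Basis (ℤ ⊕ Fin (p / 2 + 1)) ℂ g
  basis_L : ∀ m : ℤ, basis (Sum.inl m) = L m
  basis_C : ∀ i : Fin (p / 2 + 1), basis (Sum.inr i) = C (i : ℕ)
  bracket_LL : ∀ m n : ℤ, (p : ℤ) ∣ m → (p : ℤ) ∣ n →
    ⁅L m, L n⁆ = ((n : ℂ) - (m : ℂ)) • L (m + n) +
      (if m + n = 0 then (1 / 12 : ℂ) * (((m : ℂ) / p) ^ 3 - (m : ℂ) / p) else 0) • C 0
  bracket_Lr : ∀ m r : ℤ, (p : ℤ) ∣ m → ¬ (p : ℤ) ∣ r →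
    ⁅L m, L r⁆ = (r : ℂ) • L (m + r)
  bracket_rr : ∀ r s : ℤ, ¬ (p : ℤ) ∣ r → ¬ (p : ℤ) ∣ s →
    ⁅L r, L s⁆ = (if r + s = 0 then (r : ℂ) else 0) •
      C (min (r % (p : ℤ)).toNat (p - (r % (p : ℤ)).toNat))
  central_C : ∀ i : ℕ, i ≤ p / 2 → ∀ x : g, ⁅C i, x⁆ = 0

theorem lie_mem_span_aux {g : Type} [LieRing g] [LieAlgebra ℂ g]
    (X Y : Set g) (Z : Submodule ℂ g)
    (h : ∀ a ∈ X, ∀ b ∈ Y, ⁅a, b⁆ ∈ Z) :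
    ∀ x ∈ Submodule.span ℂ X, ∀ y ∈ Submodule.span ℂ Y, ⁅x, y⁆ ∈ Z := by
  intro x hx
  induction hx using Submodule.span_induction with
  | mem a ha =>
      intro y hy
      induction hy using Submodule.span_induction with
      | mem b hb => exact h a ha b hb
      | zero => simp
      | add b c _ _ hb hc => rw [lie_add]; exact Z.add_mem hb hc
      | smul t b _ hb => rw [lie_smul]; exact Z.smul_mem t hb
  | zero => intro y hy; simp
  | add a b _ _ ha hb => intro y hy; rw [add_lie]; exact Z.add_mem (ha y hy) (hb y hy)
  | smul t a _ ha => intro y hy; rw [smul_lie]; exact Z.smul_mem t (ha y hy)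

/-- `𝔏(0) = span{L_{pm}} ⊕ ℂC_0` is a Lie subalgebra of `𝔏`, and for
`1 ≤ j ≤ p-1`, `𝔏(j) = span{L_{j+pm}} ⊕ ℂC_{j̃}` (with `j̃ = min(j, p-j)`) is a Lie ideal. -/
theorem gapVirasoro_L0_subalgebra_Lj_ideal
    (p : ℕ) (hp : 2 ≤ p) (g : Type) [LieRing g] [LieAlgebra ℂ g] (V : GapVirasoro p g) :
    (∃ S : LieSubalgebra ℂ g, (S : Submodule ℂ g) =
        Submodule.span ℂ ((Set.range fun m : ℤ => V.L ((p : ℤ) * m)) ∪ {V.C 0})) ∧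
    (∀ j : ℕ, 1 ≤ j → j ≤ p - 1 →
      ∃ I : LieIdeal ℂ g, (I : Submodule ℂ g) =
        Submodule.span ℂ
          ((Set.range fun m : ℤ => V.L ((j : ℤ) + (p : ℤ) * m)) ∪ {V.C (min j (p - j))})) := by
  constructor
  · -- subalgebra
    set G : Set g := (Set.range fun m : ℤ => V.L ((p : ℤ) * m)) ∪ {V.C 0} with hG
    have key : ∀ a ∈ G, ∀ b ∈ G, ⁅a, b⁆ ∈ Submodule.span ℂ G := by
      rintro a (⟨m, rfl⟩ | rfl) b (⟨n, rfl⟩ | rfl)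
      · rw [V.bracket_LL _ _ (dvd_mul_right _ _) (dvd_mul_right _ _)]
        have h1 : (p : ℤ) * m + (p : ℤ) * n = (p : ℤ) * (m + n) := by ring
        rw [h1]
        exact Submodule.add_mem _
          (Submodule.smul_mem _ _ (Submodule.subset_span (Or.inl ⟨m + n, rfl⟩)))
          (Submodule.smul_mem _ _ (Submodule.subset_span (Or.inr rfl)))
      · rw [← lie_skew, V.central_C 0 (Nat.zero_le _) _, neg_zero]
        exact Submodule.zero_mem _
      · rw [V.central_C 0 (Nat.zero_le _) _]; exact Submodule.zero_mem _
      · rw [V.central_C 0 (Nat.zero_le _) _]; exact Submodule.zero_mem _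
    exact ⟨{ toSubmodule := Submodule.span ℂ G,
             lie_mem' := fun hx hy => lie_mem_span_aux G G _ key _ hx _ hy }, rfl⟩
  · intro j hj1 hj2
    set G : Set g := (Set.range fun m : ℤ => V.L ((j : ℤ) + (p : ℤ) * m)) ∪ {V.C (min j (p - j))}
      with hG
    have hjp : min j (p - j) ≤ p / 2 := by
      rw [Nat.min_def]; split <;> omega
    have hndvd : ∀ m' : ℤ, ¬ (p : ℤ) ∣ ((j : ℤ) + (p : ℤ) * m') := by
      intro m' hdvd
      have hj : (p : ℤ) ∣ (j : ℤ) := (dvd_add_left (dvd_mul_right _ _)).mp hdvd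
      have h2 := Nat.le_of_dvd (by omega) (Int.natCast_dvd_natCast.mp hj)
      omega
    have key : ∀ a ∈ Set.range V.basis, ∀ b ∈ G, ⁅a, b⁆ ∈ Submodule.span ℂ G := by
      rintro a ⟨(m | i), rfl⟩ b hb
      · rw [V.basis_L]
        rcases hb with ⟨m', rfl⟩ | rfl
        · by_cases hm : (p : ℤ) ∣ m
          · obtain ⟨k, rfl⟩ := hm
            rw [V.bracket_Lr _ _ (dvd_mul_right _ _) (hndvd m')]
            have h1 : (p : ℤ) * k + ((j : ℤ) + (p : ℤ) * m') = (j : ℤ) + (p : ℤ) * (k + m') := by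
              ring
            rw [h1]
            exact Submodule.smul_mem _ _ (Submodule.subset_span (Or.inl ⟨k + m', rfl⟩))
          · rw [V.bracket_rr _ _ hm (hndvd m')]
            by_cases h0 : m + ((j : ℤ) + (p : ℤ) * m') = 0
            · have hmval : m = -(j : ℤ) + (p : ℤ) * (-m') := by linarith
              have hmod : m % (p : ℤ) = (p : ℤ) - j := by
                rw [hmval, Int.add_mul_emod_self_left,
                  show (-(j : ℤ)) = ((p : ℤ) - j) + (p : ℤ) * (-1) from by ring,
                  Int.add_mul_emod_self_left]
                exact Int.emod_eq_of_lt (by omega) (by omega)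
              have hidx : min (m % (p : ℤ)).toNat (p - (m % (p : ℤ)).toNat) = min j (p - j) := by
                rw [hmod]; omega
              rw [hidx]
              exact Submodule.smul_mem _ _ (Submodule.subset_span (Or.inr rfl))
            · rw [if_neg h0, zero_smul]
              exact Submodule.zero_mem _
        · rw [← lie_skew, V.central_C _ hjp _, neg_zero]
          exact Submodule.zero_mem _
      · rw [V.basis_C, V.central_C _ (by omega : (i : ℕ) ≤ p / 2) _]
        exact Submodule.zero_mem _
    refine ⟨{ toSubmodule := Submodule.span ℂ G,
              lie_mem := fun {x m} hm => ?_ }, rfl⟩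
    have hx : x ∈ Submodule.span ℂ (Set.range V.basis) := by
      rw [V.basis.span_eq]; trivial
    exact lie_mem_span_aux _ G _ key x hx m hm
end

section
/- Let V be a simple module over the Virasoro subalgebra 𝔏(0) = span{L_{pm} : m ∈ ℤ} ⊕ ℂC_0 of 𝔏. Extend the action to all of 𝔏 by letting L_i act as zero for every i ∉ pℤ and letting C_j act as zero for 1 ≤ j ≤ ⌊p/2⌋. Then this defines an 𝔏-module structure on V, the resulting 𝔏-module is simple, and if moreover for each v ∈ V one has L_{pm} v = 0 for all sufficiently large m, then the resulting 𝔏-module is restricted. -/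
attribute [local instance 100] LieRing.ofAssociativeRing

/-- a simple module over the Virasoro subalgebra `𝔏(0)`, extended by zero
on all `L_i` with `i ∉ pℤ` and on `C_1, …, C_⌊p/2⌋`, becomes a simple `𝔏`-module, which
is restricted whenever the original `𝔏(0)`-action is restricted.

Here the `𝔏(0)`-module is given by operators `ρ0 m` (the action of `L_{pm}`) and `c0`
(the action of `C_0`) satisfying the Virasoro relations inherited from `𝔏`. -/
theorem gapVirasoro_module_from_Virasoro
    (p : ℕ) (hp : 2 ≤ p) (g : Type) [LieRing g] [LieAlgebra ℂ g] (V : GapVirasoro p g)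
    (W : Type) [AddCommGroup W] [Module ℂ W]
    (ρ0 : ℤ → Module.End ℂ W) (c0 : Module.End ℂ W)
    (hrel : ∀ m n : ℤ, ⁅ρ0 m, ρ0 n⁆ = ((p : ℂ) * ((n : ℂ) - (m : ℂ))) • ρ0 (m + n) +
      (if m + n = 0 then (1 / 12 : ℂ) * ((m : ℂ) ^ 3 - (m : ℂ)) else 0) • c0)
    (hcen : ∀ m : ℤ, ⁅c0, ρ0 m⁆ = 0)
    (hsimple : (∃ w : W, w ≠ 0) ∧
      ∀ U : Submodule ℂ W, (∀ m : ℤ, ∀ u ∈ U, ρ0 m u ∈ U) → (∀ u ∈ U, c0 u ∈ U) →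
        U = ⊥ ∨ U = ⊤) :
    ∃ ρ : g →ₗ⁅ℂ⁆ Module.End ℂ W,
      (∀ m : ℤ, ρ (V.L ((p : ℤ) * m)) = ρ0 m) ∧
      (ρ (V.C 0) = c0) ∧
      (∀ i : ℤ, ¬ (p : ℤ) ∣ i → ρ (V.L i) = 0) ∧
      (∀ j : ℕ, 1 ≤ j → j ≤ p / 2 → ρ (V.C j) = 0) ∧
      (∀ U : Submodule ℂ W, (∀ x : g, ∀ u ∈ U, ρ x u ∈ U) → U = ⊥ ∨ U = ⊤) ∧
      ((∀ w : W, ∃ K : ℤ, ∀ m : ℤ, K ≤ m → ρ0 m w = 0) →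
        ∀ w : W, ∃ K : ℤ, ∀ n : ℤ, K ≤ n → ρ (V.L n) w = 0) := by
  classical
  have hp0 : (0:ℤ) < (p:ℤ) := by exact_mod_cast (by omega : 0 < p)
  have hpZ : ((p:ℤ)) ≠ 0 := hp0.ne'
  have hpc : ((p:ℂ)) ≠ 0 := by
    exact_mod_cast (by omega : p ≠ 0)
  set d : ℤ ⊕ Fin (p / 2 + 1) → Module.End ℂ W := fun s =>
    match s with
    | Sum.inl m => if (p:ℤ) ∣ m then ρ0 (m / p) else 0
    | Sum.inr i => if (i:ℕ) = 0 then c0 else 0 with hd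
  set f : g →ₗ[ℂ] Module.End ℂ W := V.basis.constr ℂ d with hf
  have fL : ∀ m : ℤ, f (V.L m) = if (p:ℤ) ∣ m then ρ0 (m / p) else 0 := by
    intro m
    rw [← V.basis_L m, hf]
    exact V.basis.constr_basis ℂ d (Sum.inl m)
  have fC : ∀ i : Fin (p / 2 + 1), f (V.C (i:ℕ)) = if (i:ℕ) = 0 then c0 else 0 := by
    intro i
    rw [← V.basis_C i, hf]
    exact V.basis.constr_basis ℂ d (Sum.inr i)
  have fLmul : ∀ a : ℤ, f (V.L ((p:ℤ) * a)) = ρ0 a := by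
    intro a
    rw [fL, if_pos (dvd_mul_right _ _), Int.mul_ediv_cancel_left a hpZ]
  have fC0 : f (V.C 0) = c0 := by
    have := fC ⟨0, by omega⟩
    simpa using this
  have fCk : ∀ k : ℕ, 1 ≤ k → k ≤ p / 2 → f (V.C k) = 0 := by
    intro k h1 h2
    have h := fC ⟨k, by omega⟩
    simp only [Fin.val_mk] at h
    rw [h, if_neg (by omega : ¬ k = 0)]
  have hρc : ∀ k : ℤ, ⁅ρ0 k, c0⁆ = 0 := by
    intro k
    rw [← lie_skew, hcen, neg_zero]
  -- key bracket compatibility on basis vectors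
  have key : ∀ s t, f ⁅V.basis s, V.basis t⁆ = ⁅f (V.basis s), f (V.basis t)⁆ := by
    rintro (m | i) (n | j)
    · rw [V.basis_L, V.basis_L]
      by_cases hm : (p:ℤ) ∣ m
      · by_cases hn : (p:ℤ) ∣ n
        · obtain ⟨a, rfl⟩ := hm
          obtain ⟨b, rfl⟩ := hn
          rw [V.bracket_LL _ _ (dvd_mul_right _ _) (dvd_mul_right _ _), map_add, map_smul,
            map_smul, show (p:ℤ)*a + (p:ℤ)*b = (p:ℤ)*(a+b) by ring, fLmul, fC0,
            fLmul, fLmul, hrel]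
          have hcast : (((p:ℤ)*a : ℤ) : ℂ) / (p:ℂ) = (a:ℂ) := by
            push_cast
            exact mul_div_cancel_left₀ _ hpc
          by_cases h0 : a + b = 0
          · rw [if_pos h0, if_pos (by rw [h0, mul_zero])]
            congr 1
            · congr 1
              push_cast; ring
            · rw [hcast]
          · rw [if_neg h0, if_neg (by
              intro hc
              exact h0 (by
                rcases mul_eq_zero.mp hc with h | h
                · exact absurd h hpZ
                · exact h))]
            simp only [zero_smul, add_zero]
            congr 1
            push_cast; ring
        · have hmn : ¬ (p:ℤ) ∣ (m + n) := fun h => hn ((dvd_add_right hm).mp h)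
          rw [V.bracket_Lr m n hm hn, map_smul, fL, if_neg hmn, fL n, if_neg hn,
            lie_zero, smul_zero]
      · by_cases hn : (p:ℤ) ∣ n
        · have hmn : ¬ (p:ℤ) ∣ (n + m) := fun h => hm ((dvd_add_right hn).mp h)
          rw [← lie_skew (V.L m) (V.L n), V.bracket_Lr n m hn hm, map_neg, map_smul,
            fL, if_neg hmn, fL m, if_neg hm, zero_lie, smul_zero, neg_zero]
        · rw [V.bracket_rr m n hm hn, map_smul, fL m, if_neg hm, zero_lie]
          have h1 : m % (p:ℤ) ≠ 0 := fun h => hm (Int.dvd_of_emod_eq_zero h)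
          have h2 : 0 ≤ m % (p:ℤ) := Int.emod_nonneg m hpZ
          have h3 : m % (p:ℤ) < p := Int.emod_lt_of_pos m hp0
          set r : ℕ := (m % (p:ℤ)).toNat with hr
          have hr1 : 1 ≤ r := by omega
          have hr2 : r < p := by omega
          have hk2 : min r (p - r) ≤ p / 2 := by
            rcases Nat.le_total r (p - r) with h | h
            · rw [min_eq_left h]; omega
            · rw [min_eq_right h]; omega
          rw [fCk _ (le_min (by omega) (by omega)) hk2, smul_zero]
    · rw [V.basis_L, V.basis_C, ← lie_skew,
        V.central_C (j:ℕ) (Nat.lt_succ_iff.mp j.isLt) (V.L m), neg_zero, map_zero,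
        fL, fC]
      split_ifs <;> simp [hρc]
    · rw [V.basis_C, V.basis_L,
        V.central_C (i:ℕ) (Nat.lt_succ_iff.mp i.isLt) (V.L n), map_zero, fC, fL]
      split_ifs <;> simp [hcen]
    · rw [V.basis_C, V.basis_C,
        V.central_C (i:ℕ) (Nat.lt_succ_iff.mp i.isLt) _, map_zero, fC, fC]
      split_ifs <;> simp
  have key' : ∀ x y : g, f ⁅x, y⁆ = ⁅f x, f y⁆ := by
    set B1 : g →ₗ[ℂ] g →ₗ[ℂ] Module.End ℂ W :=
      ((LieAlgebra.ad ℂ g : g →ₗ⁅ℂ⁆ Module.End ℂ g) :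
        g →ₗ[ℂ] Module.End ℂ g).compr₂ f with hB1
    set B2 : g →ₗ[ℂ] g →ₗ[ℂ] Module.End ℂ W :=
      ((((LieAlgebra.ad ℂ (Module.End ℂ W) : _ →ₗ⁅ℂ⁆ _) :
        Module.End ℂ W →ₗ[ℂ] Module.End ℂ (Module.End ℂ W)).comp f).compl₂ f) with hB2
    have hB : B1 = B2 := by
      apply V.basis.ext
      intro s
      apply V.basis.ext
      intro t
      have := key s t
      simpa [hB1, hB2, LieAlgebra.ad_apply] using this
    intro x y
    have := LinearMap.congr_fun (LinearMap.congr_fun hB x) y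
    simpa [hB1, hB2, LieAlgebra.ad_apply] using this
  set ρ : g →ₗ⁅ℂ⁆ Module.End ℂ W :=
    { toLinearMap := f, map_lie' := fun {x y} => key' x y } with hρ
  have hρeq : ∀ x : g, ρ x = f x := fun x => rfl
  refine ⟨ρ, ?_, ?_, ?_, ?_, ?_, ?_⟩
  · intro m; rw [hρeq, fLmul]
  · rw [hρeq, fC0]
  · intro i hi; rw [hρeq, fL, if_neg hi]
  · intro j hj1 hj2; rw [hρeq, fCk j hj1 hj2]
  · intro U hU
    refine hsimple.2 U ?_ ?_
    · intro m u hu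
      have := hU (V.L ((p:ℤ) * m)) u hu
      rwa [hρeq, fLmul] at this
    · intro u hu
      have := hU (V.C 0) u hu
      rwa [hρeq, fC0] at this
  · intro hres w
    obtain ⟨K, hK⟩ := hres w
    refine ⟨(p:ℤ) * K, fun n hn => ?_⟩
    by_cases hdvd : (p:ℤ) ∣ n
    · obtain ⟨q, rfl⟩ := hdvd
      rw [hρeq, fLmul]
      exact hK q (le_of_mul_le_mul_left hn hp0)
    · rw [hρeq, fL, if_neg hdvd]
      rfl
end

section
/- Let ξ be a primitive p-th root of unity. The linear map σ_p : 𝒩_p → 𝒩_p determined on the basis by σ_p(T_m) = T_m, σ_p(N^i_m) = ξ·N^i_m (m ∈ ℤ, 1 ≤ i ≤ p−1), σ_p(K_0) = K_0 and σ_p(K_j) = ξ²·K_j (1 ≤ j ≤ ⌊p/2⌋) is a Lie algebra automorphism of 𝒩_p, and its order is exactly p, i.e. σ_p^p = id and σ_p^m ≠ id for every 0 < m < p. -/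
/-- The Lie algebra `𝒩_p` structure on a complex Lie algebra `g`:
`T m` are the Virasoro-type generators, `N i m` (for `1 ≤ i ≤ p-1`) the Heisenberg-type
generators, and `K j` (for `0 ≤ j ≤ ⌊p/2⌋`) the central elements.  The convention
`K_i = K_{p-i}` for `i > ⌊p/2⌋` is incorporated in the bracket `[N^i, N^j]` by using the
index `min i (p - i)`. -/
structure NpAlgebra (p : ℕ) (g : Type) [LieRing g] [LieAlgebra ℂ g] where
  T : ℤ → g
  N : ℕ → ℤ → g
  K : ℕ → g
  basis : Module.Basis (ℤ ⊕ ((Fin (p - 1) × ℤ) ⊕ Fin (p / 2 + 1))) ℂ g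
  basis_T : ∀ m : ℤ, basis (Sum.inl m) = T m
  basis_N : ∀ (i : Fin (p - 1)) (m : ℤ), basis (Sum.inr (Sum.inl (i, m))) = N ((i : ℕ) + 1) m
  basis_K : ∀ j : Fin (p / 2 + 1), basis (Sum.inr (Sum.inr j)) = K (j : ℕ)
  bracket_TT : ∀ m n : ℤ, ⁅T m, T n⁆ = ((m : ℂ) - (n : ℂ)) • T (m + n) +
    (if m + n = 0 then (1 / 12 : ℂ) * ((m : ℂ) ^ 3 - (m : ℂ)) else 0) • K 0
  bracket_TN : ∀ (m n : ℤ) (i : ℕ), 1 ≤ i → i ≤ p - 1 →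
    ⁅T m, N i n⁆ = (-(n : ℂ)) • N i (m + n)
  bracket_NN : ∀ (m n : ℤ) (i j : ℕ), 1 ≤ i → i ≤ p - 1 → 1 ≤ j → j ≤ p - 1 →
    ⁅N i m, N j n⁆ = (if i + j = p ∧ m + n = 0 then (m : ℂ) else 0) • K (min i (p - i))
  central_K : ∀ j : ℕ, j ≤ p / 2 → ∀ x : g, ⁅K j, x⁆ = 0

/-- for a primitive `p`-th root of unity `ξ`, the linear map determined by
`σ(T_m) = T_m`, `σ(N^i_m) = ξ·N^i_m`, `σ(K_0) = K_0`, `σ(K_j) = ξ²·K_j` is a Lie algebra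
automorphism of `𝒩_p` of order exactly `p`. -/
theorem Np_automorphism_sigma
    (p : ℕ) (hp : 2 ≤ p) (g : Type) [LieRing g] [LieAlgebra ℂ g] (A : NpAlgebra p g)
    (ξ : ℂ) (hξ : IsPrimitiveRoot ξ p) :
    ∃ σ : g ≃ₗ⁅ℂ⁆ g,
      (∀ m : ℤ, σ (A.T m) = A.T m) ∧
      (∀ (i : ℕ) (m : ℤ), 1 ≤ i → i ≤ p - 1 → σ (A.N i m) = ξ • A.N i m) ∧
      (σ (A.K 0) = A.K 0) ∧
      (∀ j : ℕ, 1 ≤ j → j ≤ p / 2 → σ (A.K j) = (ξ ^ 2) • A.K j) ∧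
      (∀ x : g, (⇑σ)^[p] x = x) ∧
      (∀ m : ℕ, 0 < m → m < p → ∃ x : g, (⇑σ)^[m] x ≠ x) := by
  have hp0 : p ≠ 0 := by omega
  have hξ0 : ξ ≠ 0 := hξ.ne_zero hp0
  have hξp : ξ ^ p = 1 := hξ.pow_eq_one
  -- the eigenvalue of σ on each basis vector
  set c : (ℤ ⊕ ((Fin (p - 1) × ℤ) ⊕ Fin (p / 2 + 1))) → ℂ :=
    fun k => match k with
      | Sum.inl _ => 1
      | Sum.inr (Sum.inl _) => ξ
      | Sum.inr (Sum.inr j) => if (j : ℕ) = 0 then 1 else ξ ^ 2 with hc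
  have hc0 : ∀ k, c k ≠ 0 := by
    rintro (m | ⟨⟨i, m⟩ | j⟩)
    · exact one_ne_zero
    · exact hξ0
    · simp only [hc]
      split
      · exact one_ne_zero
      · exact pow_ne_zero 2 hξ0
  have hcp : ∀ k, c k ^ p = 1 := by
    rintro (m | ⟨⟨i, m⟩ | j⟩)
    · exact one_pow p
    · exact hξp
    · simp only [hc]
      split
      · exact one_pow p
      · rw [← pow_mul, mul_comm, pow_mul, hξp, one_pow]
  set f : g →ₗ[ℂ] g := A.basis.constr ℂ (fun k => c k • A.basis k) with hf
  set f' : g →ₗ[ℂ] g := A.basis.constr ℂ (fun k => (c k)⁻¹ • A.basis k) with hf'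
  have hfb : ∀ k, f (A.basis k) = c k • A.basis k := fun k => A.basis.constr_basis ℂ _ k
  have hf'b : ∀ k, f' (A.basis k) = (c k)⁻¹ • A.basis k := fun k => A.basis.constr_basis ℂ _ k
  -- values of f on the generators
  have hfT : ∀ m : ℤ, f (A.T m) = A.T m := by
    intro m
    rw [← A.basis_T, hfb]
    simp [hc]
  have hK0lt : (0 : ℕ) < p / 2 + 1 := Nat.succ_pos _
  have hfK0 : f (A.K 0) = A.K 0 := by
    have := A.basis_K ⟨0, hK0lt⟩
    simp only at this
    rw [← this, hfb]
    simp [hc]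
  have hfKj : ∀ j : ℕ, 1 ≤ j → j ≤ p / 2 → f (A.K j) = (ξ ^ 2) • A.K j := by
    intro j h1 h2
    have hjlt : j < p / 2 + 1 := by omega
    have := A.basis_K ⟨j, hjlt⟩
    simp only at this
    rw [← this, hfb]
    simp only [hc]
    rw [if_neg (by simpa using by omega : ¬ ((⟨j, hjlt⟩ : Fin (p / 2 + 1)) : ℕ) = 0)]
  have hfN : ∀ (i : ℕ) (m : ℤ), 1 ≤ i → i ≤ p - 1 → f (A.N i m) = ξ • A.N i m := by
    intro i m h1 h2
    have hi : i - 1 < p - 1 := by omega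
    have hi1 : ((⟨i - 1, hi⟩ : Fin (p - 1)) : ℕ) + 1 = i := by simp; omega
    have := A.basis_N ⟨i - 1, hi⟩ m
    rw [hi1] at this
    rw [← this, hfb]
  -- brackets with any K vanish on both sides
  have hKz : ∀ j : ℕ, j ≤ p / 2 → ∀ x : g, ⁅x, A.K j⁆ = 0 := by
    intro j hj x
    rw [← lie_skew, A.central_K j hj, neg_zero]
  -- the key bracket computation on basis vectors
  have key : ∀ k l, f ⁅A.basis k, A.basis l⁆ = ⁅f (A.basis k), f (A.basis l)⁆ := by
    have hbK : ∀ j : Fin (p / 2 + 1), ∃ d : ℂ, f (A.K (j : ℕ)) = d • A.K (j : ℕ) :=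
      fun j => ⟨c (Sum.inr (Sum.inr j)), by rw [← A.basis_K, hfb]⟩
    have hNbounds : ∀ i : Fin (p - 1), 1 ≤ (i : ℕ) + 1 ∧ (i : ℕ) + 1 ≤ p - 1 := by
      intro i; exact ⟨Nat.le_add_left 1 _, by omega⟩
    rintro (m | ⟨⟨i, m⟩ | j⟩) (n | ⟨⟨i', n⟩ | j'⟩)
    · -- T T
      rw [A.basis_T, A.basis_T, hfT, hfT, A.bracket_TT, map_add, map_smul, map_smul, hfT,
        hfK0]
    · -- T N
      obtain ⟨h1, h2⟩ := hNbounds i'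
      rw [A.basis_T, A.basis_N, hfT, hfN _ _ h1 h2, A.bracket_TN m n _ h1 h2, map_smul,
        hfN _ _ h1 h2, lie_smul, A.bracket_TN m n _ h1 h2, smul_comm]
    · -- T K
      obtain ⟨d, hd⟩ := hbK j'
      have hj' : (j' : ℕ) ≤ p / 2 := by omega
      rw [A.basis_T, A.basis_K, hKz _ hj', map_zero, hfT, hd, lie_smul, hKz _ hj',
        smul_zero]
    · -- N T
      obtain ⟨h1, h2⟩ := hNbounds i
      rw [A.basis_N, A.basis_T, hfT, hfN _ _ h1 h2, ← lie_skew (A.N _ m) (A.T n),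
        ← lie_skew (ξ • A.N _ m) (A.T n), lie_smul, A.bracket_TN n m _ h1 h2, map_neg,
        map_smul, hfN _ _ h1 h2]
      module
    · -- N N
      obtain ⟨h1, h2⟩ := hNbounds i
      obtain ⟨h1', h2'⟩ := hNbounds i'
      have hq1 : 1 ≤ min ((i : ℕ) + 1) (p - ((i : ℕ) + 1)) := by omega
      have hq2 : min ((i : ℕ) + 1) (p - ((i : ℕ) + 1)) ≤ p / 2 := by omega
      rw [A.basis_N, A.basis_N, hfN _ _ h1 h2, hfN _ _ h1' h2',
        A.bracket_NN m n _ _ h1 h2 h1' h2', map_smul, hfKj _ hq1 hq2, lie_smul, smul_lie,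
        A.bracket_NN m n _ _ h1 h2 h1' h2']
      module
    · -- N K
      obtain ⟨d, hd⟩ := hbK j'
      obtain ⟨h1, h2⟩ := hNbounds i
      have hj' : (j' : ℕ) ≤ p / 2 := by omega
      rw [A.basis_N, A.basis_K, hKz _ hj', map_zero, hfN _ _ h1 h2, hd, lie_smul,
        smul_lie, hKz _ hj', smul_zero, smul_zero]
    · -- K T
      obtain ⟨d, hd⟩ := hbK j
      have hj : (j : ℕ) ≤ p / 2 := by omega
      rw [A.basis_K, A.basis_T, A.central_K _ hj, map_zero, hd, hfT, smul_lie,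
        A.central_K _ hj, smul_zero]
    · -- K N
      obtain ⟨d, hd⟩ := hbK j
      obtain ⟨h1, h2⟩ := hNbounds i'
      have hj : (j : ℕ) ≤ p / 2 := by omega
      rw [A.basis_K, A.basis_N, A.central_K _ hj, map_zero, hd, hfN _ _ h1 h2, smul_lie,
        lie_smul, A.central_K _ hj, smul_zero, smul_zero]
    · -- K K
      obtain ⟨d, hd⟩ := hbK j
      obtain ⟨d', hd'⟩ := hbK j'
      have hj : (j : ℕ) ≤ p / 2 := by omega
      rw [A.basis_K, A.basis_K, A.central_K _ hj, map_zero, hd, hd', smul_lie, lie_smul,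
        A.central_K _ hj, smul_zero, smul_zero]
  -- extend to all x, y by bilinearity
  have keyf : ∀ x y : g, f ⁅x, y⁆ = ⁅f x, f y⁆ := by
    set B : g →ₗ[ℂ] g →ₗ[ℂ] g := LinearMap.mk₂ ℂ (fun x y => ⁅x, y⁆) add_lie smul_lie lie_add lie_smul with hB
    have hBa : ∀ x y : g, B x y = ⁅x, y⁆ := fun x y => rfl
    have hbil : B.compr₂ f = (B ∘ₗ f).compl₂ f := by
      apply A.basis.ext
      intro k
      apply A.basis.ext
      intro l
      simpa [LinearMap.compr₂_apply, LinearMap.compl₂_apply, hBa] using key k l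
    intro x y
    have := LinearMap.congr_fun (LinearMap.congr_fun hbil x) y
    simpa [LinearMap.compr₂_apply, LinearMap.compl₂_apply, hBa] using this
  -- f is an equivalence
  have hff' : f ∘ₗ f' = LinearMap.id := by
    apply A.basis.ext
    intro k
    simp only [LinearMap.comp_apply, hf'b, map_smul, hfb, LinearMap.id_apply, smul_smul,
      inv_mul_cancel₀ (hc0 k), one_smul]
  have hf'f : f' ∘ₗ f = LinearMap.id := by
    apply A.basis.ext
    intro k
    simp only [LinearMap.comp_apply, hfb, map_smul, hf'b, LinearMap.id_apply, smul_smul,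
      mul_inv_cancel₀ (hc0 k), one_smul]
  set e : g ≃ₗ[ℂ] g := LinearEquiv.ofLinear f f' hff' hf'f with he
  refine ⟨⟨⟨f, ?_⟩, e.symm, e.left_inv, e.right_inv⟩, hfT, hfN, hfK0,
    fun j h1 h2 => hfKj j h1 h2, ?_, ?_⟩
  · intro x y
    exact keyf x y
  · -- σ^[p] = id
    intro x
    have hpow : ∀ (n : ℕ) (k), (f ^ n) (A.basis k) = c k ^ n • A.basis k := by
      intro n
      induction n with
      | zero => intro k; simp
      | succ n ih =>
        intro k
        rw [pow_succ, Module.End.mul_apply, hfb, map_smul, ih, smul_smul, pow_succ]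
        ring_nf
    have hfp : f ^ p = LinearMap.id := by
      apply A.basis.ext
      intro k
      rw [hpow p k, hcp k, one_smul, LinearMap.id_apply]
    show (⇑f)^[p] x = x
    rw [← Module.End.pow_apply, hfp]
    rfl
  · -- σ^[m] ≠ id for 0 < m < p
    intro m hm1 hm2
    have h01 : (0 : ℕ) < p - 1 := by omega
    refine ⟨A.basis (Sum.inr (Sum.inl (⟨0, h01⟩, 0))), ?_⟩
    show (⇑f)^[m] _ ≠ _
    have hpow : ∀ n : ℕ, (f ^ n) (A.basis (Sum.inr (Sum.inl (⟨0, h01⟩, 0))))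
        = ξ ^ n • A.basis (Sum.inr (Sum.inl (⟨0, h01⟩, 0))) := by
      intro n
      induction n with
      | zero => simp
      | succ n ih =>
        rw [pow_succ, Module.End.mul_apply, hfb, map_smul, ih, smul_smul, pow_succ]
        congr 1
        simp [hc]
        ring
    intro hcon
    have : (f ^ m) (A.basis (Sum.inr (Sum.inl (⟨0, h01⟩, 0))))
        = A.basis (Sum.inr (Sum.inl (⟨0, h01⟩, 0))) := by
      rw [Module.End.pow_apply]
      exact hcon
    rw [hpow m] at this
    have hx0 : A.basis (Sum.inr (Sum.inl (⟨0, h01⟩, 0))) ≠ 0 := A.basis.ne_zero _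
    have : (ξ ^ m - 1) • A.basis (Sum.inr (Sum.inl (⟨0, h01⟩, 0))) = 0 := by
      rw [sub_smul, one_smul, this, sub_self]
    rcases smul_eq_zero.mp this with h | h
    · exact hξ.pow_ne_one_of_pos_of_lt hm1.ne' hm2 (by linear_combination h)
    · exact hx0 h
end

section
/- Let V be a nonzero 𝔏-module and k ∈ ℤ₊ such that every L_i with i ≥ k acts locally nilpotently on V. Then there exist n ∈ ℤ₊ and a nonzero vector v ∈ V such that L_i v = 0 for all i ≥ n. -/
section Aux

set_option linter.unusedSectionVars false

variable {g : Type} [LieRing g] [LieAlgebra ℂ g] {M : Type}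
  [AddCommGroup M] [Module ℂ M] [LieRingModule g M] [LieModule ℂ g M]

/-- From local nilpotency get a nonzero kernel vector. -/
lemma exists_ker_vec (x : g) :
    ∀ (t : ℕ) (v : M), v ≠ 0 → (fun z : M => ⁅x, z⁆)^[t] v = 0 →
      ∃ w : M, w ≠ 0 ∧ ⁅x, w⁆ = 0 := by
  intro t
  induction t with
  | zero => intro v hv h; simp at h; exact absurd h hv
  | succ t ih =>
    intro v hv h
    by_cases hfv : ⁅x, v⁆ = 0
    · exact ⟨v, hv, hfv⟩
    · exact ih ⁅x, v⁆ hfv (by rw [← Function.iterate_succ_apply]; exact h)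

/-- Chain vanishing lemma. -/
lemma chain_vanish (x : g) (y : ℕ → g) (c : ℕ → ℂ) (w : M)
    (hxw : ⁅x, w⁆ = 0)
    (hrec : ∀ j : ℕ, 1 ≤ j → ⁅x, y j⁆ = c j • y (j + 1))
    (hc : ∀ j : ℕ, 1 ≤ j → c j ≠ 0)
    (hnilx : ∀ v : M, ∃ t : ℕ, (fun z : M => ⁅x, z⁆)^[t] v = 0) :
    ∃ N : ℕ, ∀ j : ℕ, N ≤ j → ⁅y j, w⁆ = 0 := by
  set f : M → M := fun z => ⁅x, z⁆ with hf
  set u : ℕ → M := fun j => ⁅y j, w⁆ with hu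
  have hstep : ∀ j : ℕ, 1 ≤ j → f (u j) = c j • u (j + 1) := by
    intro j hj
    show ⁅x, ⁅y j, w⁆⁆ = c j • ⁅y (j+1), w⁆
    rw [leibniz_lie, hxw, lie_zero, add_zero, hrec j hj, smul_lie]
  have hiter : ∀ s : ℕ, ∃ d : ℂ, d ≠ 0 ∧ f^[s] (u 1) = d • u (1 + s) := by
    intro s
    induction s with
    | zero => exact ⟨1, one_ne_zero, by simp⟩
    | succ s ih =>
      obtain ⟨d, hd, hds⟩ := ih
      refine ⟨d * c (1 + s), mul_ne_zero hd (hc (1 + s) (by omega)), ?_⟩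
      rw [Function.iterate_succ_apply', hds]
      have : f (d • u (1+s)) = d • f (u (1+s)) := by
        show ⁅x, d • u (1+s)⁆ = d • ⁅x, u (1+s)⁆
        rw [lie_smul]
      rw [this, hstep (1+s) (by omega), smul_smul, Nat.add_assoc]
  obtain ⟨t, ht⟩ := hnilx (u 1)
  refine ⟨t + 1, ?_⟩
  intro j hj
  have hs : j = 1 + ((j - 1 - t) + t) := by omega
  obtain ⟨d, hd, hds⟩ := hiter ((j - 1 - t) + t)
  have hzero : f^[(j - 1 - t) + t] (u 1) = 0 := by
    rw [Function.iterate_add_apply, ht]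
    exact Function.iterate_fixed (by show ⁅x, (0:M)⁆ = 0; exact lie_zero x) _
  rw [hzero] at hds
  have := (smul_eq_zero.mp hds.symm).resolve_left hd
  rw [← hs] at this
  exact this

end Aux

/-- if every `L_i` with `i ≥ k` acts locally nilpotently on a nonzero
`𝔏`-module `M`, then some nonzero vector is annihilated by all `L_i` with `i ≥ n`,
for some `n ∈ ℤ₊`. -/
theorem gapVirasoro_locallyNilpotent_exists_annihilated
    (p : ℕ) (hp : 2 ≤ p) (g : Type) [LieRing g] [LieAlgebra ℂ g] (V : GapVirasoro p g)
    (M : Type) [AddCommGroup M] [Module ℂ M] [LieRingModule g M] [LieModule ℂ g M]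
    (hM : ∃ v : M, v ≠ 0) (k : ℤ) (hk : 1 ≤ k)
    (hnil : ∀ i : ℤ, k ≤ i → ∀ v : M, ∃ m : ℕ, (fun w : M => ⁅V.L i, w⁆)^[m] v = 0) :
    ∃ n : ℤ, 1 ≤ n ∧ ∃ v : M, v ≠ 0 ∧ ∀ i : ℤ, n ≤ i → ⁅V.L i, v⁆ = 0 := by
  obtain ⟨v0, hv0⟩ := hM
  have hp2 : (2:ℤ) ≤ (p:ℤ) := by exact_mod_cast hp
  set m : ℤ := (p:ℤ) * k with hmdef
  have hpm : (p:ℤ) ∣ m := ⟨k, rfl⟩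
  have hmpos : 1 ≤ m := by nlinarith
  have hkm : k ≤ m := by nlinarith
  obtain ⟨t0, ht0⟩ := hnil m hkm v0
  obtain ⟨w, hw, hxw⟩ := exists_ker_vec (V.L m) t0 v0 hv0 ht0
  have key : ∀ r : ℤ, ∃ N : ℕ, ∀ j : ℕ, N ≤ j → 1 ≤ r →
      ⁅V.L (r + (j:ℤ) * m), w⁆ = 0 := by
    intro r
    by_cases hr1 : 1 ≤ r
    swap
    · exact ⟨0, fun j _ h => absurd h hr1⟩
    by_cases hpr : (p:ℤ) ∣ r
    · obtain ⟨N, hN⟩ := chain_vanish (V.L m) (fun j => V.L (r + (j:ℤ)*m))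
        (fun j => ((r + (j:ℤ)*m - m : ℤ) : ℂ)) w hxw
        (by
          intro j hj
          have hdvd : (p:ℤ) ∣ (r + (j:ℤ)*m) := dvd_add hpr (Dvd.dvd.mul_left hpm _)
          rw [V.bracket_LL m _ hpm hdvd]
          have hjz : (0:ℤ) ≤ (j:ℤ) := Int.natCast_nonneg j
          have hne : ¬ (m + (r + (j:ℤ)*m) = 0) := by nlinarith
          rw [if_neg hne, zero_smul, add_zero]
          have harg : m + (r + (j:ℤ)*m) = r + ((j:ℕ)+1 : ℕ)*m := by push_cast; ring
          rw [harg]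
          congr 1
          push_cast; ring)
        (by
          intro j hj
          have hj1 : (1:ℤ) ≤ (j:ℤ) := by exact_mod_cast hj
          have : r + (j:ℤ)*m - m ≠ 0 := by nlinarith
          exact_mod_cast Int.cast_ne_zero.mpr this)
        (hnil m hkm)
      exact ⟨N, fun j hj _ => hN j hj⟩
    · obtain ⟨N, hN⟩ := chain_vanish (V.L m) (fun j => V.L (r + (j:ℤ)*m))
        (fun j => ((r + (j:ℤ)*m : ℤ) : ℂ)) w hxw
        (by
          intro j hj
          have hnd : ¬ (p:ℤ) ∣ (r + (j:ℤ)*m) := by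
            intro h
            have h2 : (p:ℤ) ∣ (j:ℤ)*m := Dvd.dvd.mul_left hpm _
            have h3 : (p:ℤ) ∣ r := by
              have := dvd_sub h h2
              simpa using this
            exact hpr h3
          rw [V.bracket_Lr m _ hpm hnd]
          have harg : m + (r + (j:ℤ)*m) = r + ((j:ℕ)+1 : ℕ)*m := by push_cast; ring
          rw [harg])
        (by
          intro j hj
          have hjz : (0:ℤ) ≤ (j:ℤ) := Int.natCast_nonneg j
          have : r + (j:ℤ)*m ≠ 0 := by nlinarith
          exact_mod_cast Int.cast_ne_zero.mpr this)
        (hnil m hkm)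
      exact ⟨N, fun j hj _ => hN j hj⟩
  choose N hN using key
  set Nmax : ℕ := (Finset.Icc (1:ℤ) m).sup N with hNmax
  refine ⟨1 + m * ((Nmax:ℤ) + 1), by nlinarith [Int.natCast_nonneg Nmax], w, hw, ?_⟩
  intro i hi
  have hdm := Int.mul_ediv_add_emod (i-1) m
  have hmne : m ≠ 0 := by omega
  have he0 : 0 ≤ (i-1) % m := Int.emod_nonneg _ hmne
  have hem : (i-1) % m < m := Int.emod_lt_of_pos _ (by omega)
  set e : ℤ := (i-1) % m with hedef
  set j0 : ℤ := (i-1) / m with hj0def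
  set r : ℤ := e + 1 with hrdef
  have hid : i = r + j0 * m := by rw [hrdef]; linarith
  have hj0 : (Nmax:ℤ) + 1 ≤ j0 := by
    have h1 : m * ((Nmax:ℤ) + 1) ≤ i - 1 := by linarith
    have := Int.le_ediv_iff_mul_le (b := i - 1) (a := (Nmax:ℤ)+1) (show (0:ℤ) < m by omega)
    exact this.mpr (by linarith)
  have hj0nn : (0:ℤ) ≤ j0 := by omega
  have hrmem : r ∈ Finset.Icc (1:ℤ) m := Finset.mem_Icc.mpr ⟨by omega, by omega⟩
  have hNr : N r ≤ Nmax := Finset.le_sup hrmem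
  set j : ℕ := j0.toNat with hjdef
  have hji : (j:ℤ) = j0 := Int.toNat_of_nonneg hj0nn
  have hjN : N r ≤ j := by
    have : (N r : ℤ) ≤ (j : ℤ) := by rw [hji]; exact_mod_cast by omega
    exact_mod_cast this
  have := hN r j hjN (by omega)
  rw [hji, ← hid] at this
  exact this
end

section
/- Let V be a simple 𝔏-module such that there exist n ∈ ℤ₊ and a nonzero vector v ∈ V with L_i v = 0 for all i ≥ n. Then V is a restricted 𝔏-module, i.e. for every w ∈ V one has L_k w = 0 for all sufficiently large k. -/
/-- Auxiliary: if `w` is annihilated by all `L_i`, `i ≥ K`, then `⁅⁅L i, L m⁆, w⁆ = 0`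
whenever `i + m ≥ K` and `i + m ≠ 0`. -/
lemma gapVirasoro_bracket_ann
    (p : ℕ) (g : Type) [LieRing g] [LieAlgebra ℂ g] (V : GapVirasoro p g)
    (M : Type) [AddCommGroup M] [Module ℂ M] [LieRingModule g M] [LieModule ℂ g M]
    (w : M) (K : ℤ) (hK : ∀ i : ℤ, K ≤ i → ⁅V.L i, w⁆ = 0)
    (i m : ℤ) (h1 : K ≤ i + m) (h2 : i + m ≠ 0) :
    ⁅(⁅V.L i, V.L m⁆ : g), w⁆ = 0 := by
  by_cases hi : (p : ℤ) ∣ i <;> by_cases hm : (p : ℤ) ∣ m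
  · rw [V.bracket_LL i m hi hm, if_neg h2, zero_smul, add_zero, smul_lie, hK _ h1, smul_zero]
  · rw [V.bracket_Lr i m hi hm, smul_lie, hK _ h1, smul_zero]
  · have : (⁅V.L i, V.L m⁆ : g) = -⁅V.L m, V.L i⁆ := (neg_eq_iff_eq_neg.mpr (lie_skew _ _).symm).symm
    rw [this, V.bracket_Lr m i hm hi, neg_lie, smul_lie,
      hK (m + i) (by rwa [add_comm]), smul_zero, neg_zero]
  · rw [V.bracket_rr i m hi hm, if_neg h2, zero_smul, zero_lie]

/-- a simple `𝔏`-module containing a nonzero vector annihilated by all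
`L_i` with `i ≥ n` (for some `n ∈ ℤ₊`) is restricted. -/
theorem gapVirasoro_simple_annihilated_restricted
    (p : ℕ) (hp : 2 ≤ p) (g : Type) [LieRing g] [LieAlgebra ℂ g] (V : GapVirasoro p g)
    (M : Type) [AddCommGroup M] [Module ℂ M] [LieRingModule g M] [LieModule ℂ g M]
    (hsimple : (∃ v : M, v ≠ 0) ∧ ∀ S : LieSubmodule ℂ g M, S = ⊥ ∨ S = ⊤)
    (n : ℤ) (hn : 1 ≤ n) (v : M) (hv : v ≠ 0)
    (hann : ∀ i : ℤ, n ≤ i → ⁅V.L i, v⁆ = 0) :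
    ∀ w : M, ∃ K : ℤ, ∀ i : ℤ, K ≤ i → ⁅V.L i, w⁆ = 0 := by
  classical
  -- the submodule of restricted vectors
  let Wsub : Submodule ℂ M :=
    { carrier := {w | ∃ K : ℤ, ∀ i : ℤ, K ≤ i → ⁅V.L i, w⁆ = 0}
      add_mem' := by
        rintro a b ⟨Ka, ha⟩ ⟨Kb, hb⟩
        exact ⟨max Ka Kb, fun i hi => by
          rw [lie_add, ha i (le_trans (le_max_left _ _) hi),
            hb i (le_trans (le_max_right _ _) hi), add_zero]⟩
      zero_mem' := ⟨0, fun i _ => lie_zero _⟩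
      smul_mem' := by
        rintro c a ⟨Ka, ha⟩
        exact ⟨Ka, fun i hi => by rw [lie_smul, ha i hi, smul_zero]⟩ }
  have hlie : ∀ (x : g) (w : M), w ∈ Wsub → ⁅x, w⁆ ∈ Wsub := by
    intro x w hw
    obtain ⟨K, hK⟩ := hw
    -- each basis vector maps w into Wsub
    have hbasis : ∀ idx : ℤ ⊕ Fin (p / 2 + 1), ⁅V.basis idx, w⁆ ∈ Wsub := by
      rintro (m | j)
      · rw [V.basis_L m]
        refine ⟨max (max (K - m) (1 - m)) K, fun i hi => ?_⟩
        have hiK : K ≤ i := le_trans (le_max_right _ _) hi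
        have h1 : K ≤ i + m := by
          have := le_trans (le_max_left _ _) (le_trans (le_max_left _ _) hi)
          omega
        have h2 : i + m ≠ 0 := by
          have := le_trans (le_max_right _ _) (le_trans (le_max_left _ _) hi)
          omega
        rw [leibniz_lie, gapVirasoro_bracket_ann p g V M w K hK i m h1 h2,
          hK i hiK, lie_zero, add_zero]
      · rw [V.basis_C j]
        refine ⟨K, fun i hi => ?_⟩
        have hj : (j : ℕ) ≤ p / 2 := Nat.lt_succ_iff.mp j.isLt
        have hc : (⁅V.L i, V.C (j : ℕ)⁆ : g) = 0 := by
          have := V.central_C (j : ℕ) hj (V.L i)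
          rw [← lie_skew, this, neg_zero]
        rw [leibniz_lie, hc, zero_lie, hK i hi, lie_zero, add_zero]
    -- linearity in x
    let f : g →ₗ[ℂ] M :=
      { toFun := fun y => ⁅y, w⁆
        map_add' := fun a b => add_lie a b w
        map_smul' := fun c a => smul_lie c a w }
    have hx : x ∈ Submodule.span ℂ (Set.range V.basis) := by
      rw [V.basis.span_eq]; trivial
    have : f x ∈ Wsub := by
      refine Submodule.span_induction ?_ ?_ ?_ ?_ hx
      · rintro y ⟨idx, rfl⟩; exact hbasis idx
      · simpa using Wsub.zero_mem
      · intro a b _ _ ha hb; rw [map_add]; exact Wsub.add_mem ha hb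
      · intro c a _ ha; rw [map_smul]; exact Wsub.smul_mem c ha
    exact this
  let W : LieSubmodule ℂ g M :=
    { Wsub with lie_mem := fun {x m} hm => hlie x m hm }
  have hvW : v ∈ W := ⟨n, hann⟩
  have hWtop : W = ⊤ := by
    rcases hsimple.2 W with h | h
    · exfalso; rw [h] at hvW; exact hv (by simpa using hvW)
    · exact h
  intro w
  have : w ∈ W := by rw [hWtop]; trivial
  exact this
end

section
/- Let V be a simple 𝔏-module such that there exist n ∈ ℤ₊ and a nonzero vector v ∈ V with L_i v = 0 for all i ≥ n. Then V is a locally finite 𝔏^{(≥n)}-module, i.e. for every w ∈ V the subspace Σ_{i∈ℕ} (𝔏^{(≥n)})^i w is finite-dimensional. -/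
namespace GapVirasoroAux

set_option linter.unusedSectionVars false
/-- lists of bounded length with entries in a finite set form a finite set -/
lemma listFin {α : Type*} (s : Set α) (hs : s.Finite) :
    ∀ k : ℕ, {l : List α | l.length ≤ k ∧ ∀ x ∈ l, x ∈ s}.Finite := by
  intro k
  induction k with
  | zero =>
    apply Set.Finite.subset (Set.finite_singleton ([] : List α))
    rintro l ⟨h1, -⟩
    simp [List.length_eq_zero_iff.mp (Nat.le_zero.mp h1)]
  | succ k ih =>
    apply Set.Finite.subset
      ((Set.finite_singleton ([] : List α)).union
        (hs.biUnion (fun a _ => ih.image (List.cons a))))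
    rintro l ⟨hl, hmem⟩
    cases l with
    | nil => exact Or.inl rfl
    | cons a l' =>
      refine Or.inr (Set.mem_biUnion (hmem a (by simp))
        ⟨l', ⟨?_, fun x hx => hmem x (by simp [hx])⟩, rfl⟩)
      simpa using hl

lemma sum_le_of_entries_le (c : ℤ) :
    ∀ l : List ℤ, (∀ x ∈ l, x ≤ c) → l.sum ≤ (l.length : ℤ) * c := by
  intro l
  induction l with
  | nil => simp
  | cons a l' ih =>
    intro h
    have h1 : a ≤ c := h a (by simp)
    have h2 : l'.sum ≤ (l'.length : ℤ) * c := ih (fun x hx => h x (by simp [hx]))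
    simp only [List.sum_cons, List.length_cons]
    push_cast
    nlinarith

variable {p : ℕ} {g : Type} [LieRing g] [LieAlgebra ℂ g] (V : GapVirasoro p g)
  {M : Type} [AddCommGroup M] [Module ℂ M] [LieRingModule g M] [LieModule ℂ g M]

/-- iterated application of the `L j` -/
def P (m : List ℤ) (w : M) : M := m.foldr (fun j z => ⁅V.L j, z⁆) w

/-- iterated application of the `C t` -/
def Cf (c : List ℕ) (w : M) : M := c.foldr (fun t z => ⁅V.C t, z⁆) w

@[simp] lemma P_nil (w : M) : P V [] w = w := rfl
@[simp] lemma P_cons (a : ℤ) (m : List ℤ) (w : M) : P V (a :: m) w = ⁅V.L a, P V m w⁆ := rfl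
@[simp] lemma Cf_nil (w : M) : Cf V [] w = w := rfl
@[simp] lemma Cf_cons (t : ℕ) (c : List ℕ) (w : M) :
    Cf V (t :: c) w = ⁅V.C t, Cf V c w⁆ := rfl

/-- the finite-dimensional "normal form" spaces -/
def G (n : ℤ) (u : M) (k : ℕ) (W : ℤ) : Submodule ℂ M :=
  Submodule.span ℂ { w | ∃ c : List ℕ, ∃ m : List ℤ, (∀ t ∈ c, t ≤ p / 2) ∧
    c.length + m.length ≤ k ∧ (∀ j ∈ m, j < n) ∧ W ≤ m.sum ∧ w = Cf V c (P V m u) }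

lemma Ccomm {t : ℕ} (ht : t ≤ p / 2) (x : g) (w : M) :
    ⁅V.C t, ⁅x, w⁆⁆ = ⁅x, ⁅V.C t, w⁆⁆ := by
  have h := leibniz_lie (V.C t) x w
  rw [V.central_C t ht x] at h
  simpa using h

lemma CfComm {c : List ℕ} (hc : ∀ t ∈ c, t ≤ p / 2) (x : g) (w : M) :
    ⁅x, Cf V c w⁆ = Cf V c ⁅x, w⁆ := by
  induction c with
  | nil => rfl
  | cons t c' ih =>
    have ht : t ≤ p / 2 := hc t (by simp)
    rw [Cf_cons, Cf_cons, ← Ccomm V ht x (Cf V c' w),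
      ih (fun s hs => hc s (by simp [hs]))]

lemma Gmono {n : ℤ} {u : M} {k k' : ℕ} {W W' : ℤ} (hk : k ≤ k') (hW : W' ≤ W) :
    G V n u k W ≤ G V n u k' W' := by
  apply Submodule.span_mono
  rintro w ⟨c, m, h1, h2, h3, h4, h5⟩
  exact ⟨c, m, h1, le_trans h2 hk, h3, le_trans hW h4, h5⟩

/-- bracketing a span by a fixed element, reduced to generators -/
lemma lie_span_le {x : g} {s : Set M} {G' : Submodule ℂ M}
    (h : ∀ w ∈ s, ⁅x, w⁆ ∈ G') : ∀ w ∈ Submodule.span ℂ s, ⁅x, w⁆ ∈ G' := by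
  intro w hw
  induction hw using Submodule.span_induction with
  | mem w hw => exact h w hw
  | zero => simpa using G'.zero_mem
  | add a b ha hb hpa hpb => rw [lie_add]; exact G'.add_mem hpa hpb
  | smul r a ha hpa => rw [lie_smul]; exact G'.smul_mem r hpa

lemma CPUSH {n : ℤ} {u : M} {k : ℕ} {W : ℤ} {t : ℕ} (ht : t ≤ p / 2) :
    ∀ w ∈ G V n u k W, ⁅V.C t, w⁆ ∈ G V n u (k + 1) W := by
  apply lie_span_le
  rintro w ⟨c, m, h1, h2, h3, h4, rfl⟩
  apply Submodule.subset_span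
  refine ⟨t :: c, m, ?_, by simpa using by omega, h3, h4, rfl⟩
  intro s hs
  rcases List.mem_cons.mp hs with h | h
  · exact h ▸ ht
  · exact h1 s h

lemma CfPUSH {n : ℤ} {u : M} {k : ℕ} {W : ℤ} {c : List ℕ} (hc : ∀ t ∈ c, t ≤ p / 2) :
    ∀ w ∈ G V n u k W, Cf V c w ∈ G V n u (k + c.length) W := by
  induction c with
  | nil => intro w hw; simpa using hw
  | cons t c' ih =>
    intro w hw
    have h1 := ih (fun s hs => hc s (by simp [hs])) w hw
    have h2 := CPUSH V (hc t (by simp)) _ h1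
    rw [Cf_cons]
    refine Gmono V ?_ le_rfl h2
    simp

lemma PREP {n : ℤ} {u : M} {k : ℕ} {W : ℤ} {b : ℤ} (hb : b < n) :
    ∀ w ∈ G V n u k W, ⁅V.L b, w⁆ ∈ G V n u (k + 1) (W + b) := by
  apply lie_span_le
  rintro w ⟨c, m, h1, h2, h3, h4, rfl⟩
  rw [CfComm V h1]
  apply Submodule.subset_span
  refine ⟨c, b :: m, h1, by simp; omega, ?_, ?_, rfl⟩
  · intro j hj
    rcases List.mem_cons.mp hj with h | h
    · exact h ▸ hb
    · exact h3 j h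
  · simp; omega

lemma BRK (hp : 2 ≤ p) (a b : ℤ) : ∃ (α β : ℂ) (t : ℕ), t ≤ p / 2 ∧ (β = 0 ∨ a + b = 0) ∧
    ⁅V.L a, V.L b⁆ = α • V.L (a + b) + β • V.C t := by
  by_cases hA : (p : ℤ) ∣ a <;> by_cases hB : (p : ℤ) ∣ b
  · refine ⟨(b : ℂ) - (a : ℂ),
      (if a + b = 0 then (1 / 12 : ℂ) * (((a : ℂ) / p) ^ 3 - (a : ℂ) / p) else 0), 0,
      Nat.zero_le _, ?_, V.bracket_LL a b hA hB⟩
    by_cases h : a + b = 0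
    · exact Or.inr h
    · exact Or.inl (if_neg h)
  · refine ⟨(b : ℂ), 0, 0, Nat.zero_le _, Or.inl rfl, ?_⟩
    rw [V.bracket_Lr a b hA hB]; simp
  · refine ⟨-(a : ℂ), 0, 0, Nat.zero_le _, Or.inl rfl, ?_⟩
    have h := V.bracket_Lr b a hB hA
    have h2 : ⁅V.L a, V.L b⁆ = -⁅V.L b, V.L a⁆ := (lie_skew _ _).symm
    rw [h2, h]
    rw [add_comm b a]
    simp [neg_smul]
  · refine ⟨0, (if a + b = 0 then (a : ℂ) else 0),
      min (a % (p : ℤ)).toNat (p - (a % (p : ℤ)).toNat), ?_, ?_, ?_⟩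
    · have hp0 : (0 : ℤ) < (p : ℤ) := by exact_mod_cast Nat.lt_of_lt_of_le Nat.zero_lt_two hp
      have h1 : a % (p : ℤ) < (p : ℤ) := Int.emod_lt_of_pos a hp0
      have h2 : (a % (p : ℤ)).toNat ≤ p := by omega
      omega
    · by_cases h : a + b = 0
      · exact Or.inr h
      · exact Or.inl (if_neg h)
    · rw [V.bracket_rr a b hA hB]; simp

/-- Key normalization lemma. -/
lemma ACT (hp : 2 ≤ p) {n : ℤ} (hn : 1 ≤ n) {u : M} (hu : ∀ i : ℤ, n ≤ i → ⁅V.L i, u⁆ = 0) :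
    ∀ (m : List ℤ) (a : ℤ), (∀ j ∈ m, j < n) →
      ⁅V.L a, P V m u⁆ ∈
        G V n u (if n ≤ a then m.length else m.length + 1) (m.sum + a) := by
  intro m
  induction m with
  | nil =>
    intro a _
    by_cases ha : n ≤ a
    · rw [if_pos ha]
      simp only [P_nil, hu a ha]
      exact Submodule.zero_mem _
    · rw [if_neg ha]
      apply Submodule.subset_span
      exact ⟨[], [a], by simp, by simp, by simpa using not_le.mp ha, by simp, rfl⟩
  | cons b m1 ih =>
    intro a hm
    have hb : b < n := hm b (by simp)
    have hm1 : ∀ j ∈ m1, j < n := fun j hj => hm j (by simp [hj])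
    by_cases ha : n ≤ a
    · rw [if_pos ha]
      rw [P_cons, leibniz_lie]
      obtain ⟨α, β, t, ht, hβ, hbrk⟩ := BRK V hp a b
      rw [hbrk, add_lie, smul_lie, smul_lie]
      have hsum : (b :: m1).sum + a = m1.sum + (a + b) := by simp [List.sum_cons]; ring
      apply Submodule.add_mem
      apply Submodule.add_mem
      · -- α • ⁅L (a+b), P m1 u⁆
        apply Submodule.smul_mem
        have h1 := ih (a + b) hm1
        refine Gmono V ?_ (le_of_eq hsum) h1
        by_cases h : n ≤ a + b <;> simp [h]
      · rcases hβ with h0 | hab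
        · rw [h0, zero_smul]; exact Submodule.zero_mem _
        · apply Submodule.smul_mem
          apply Submodule.subset_span
          refine ⟨[t], m1, by simpa using ht, by simp only [List.length_cons, List.length_nil]; omega, hm1, ?_, rfl⟩
          simp only [List.sum_cons]
          omega
      · -- ⁅L b, ⁅L a, P m1 u⁆⁆
        have h1 := ih a hm1
        rw [if_pos ha] at h1
        have h2 := PREP V hb _ h1
        refine Gmono V (by simp) (le_of_eq ?_) h2
        simp [List.sum_cons]; ring
    · rw [if_neg ha]
      apply Submodule.subset_span
      refine ⟨[], a :: b :: m1, by simp, by simp, ?_, ?_, rfl⟩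
      · intro j hj
        rcases List.mem_cons.mp hj with h | h
        · exact h ▸ not_le.mp ha
        · exact hm j h
      · simp [List.sum_cons]; omega



lemma ACTG (hp : 2 ≤ p) {n : ℤ} (hn : 1 ≤ n) {u : M}
    (hu : ∀ i : ℤ, n ≤ i → ⁅V.L i, u⁆ = 0) (a : ℤ) {k : ℕ} {W : ℤ} :
    ∀ w ∈ G V n u k W, ⁅V.L a, w⁆ ∈ G V n u (k + 1) (W + a) := by
  apply lie_span_le
  rintro w ⟨c, m, h1, h2, h3, h4, rfl⟩
  rw [CfComm V h1]
  have h5 := ACT V hp hn hu m a h3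
  have h6 : ⁅V.L a, P V m u⁆ ∈ G V n u (m.length + 1) (m.sum + a) := by
    refine Gmono V ?_ le_rfl h5
    split_ifs <;> omega
  have h7 := CfPUSH V h1 _ h6
  exact Gmono V (by omega) (by omega) h7

lemma INV (hp : 2 ≤ p) {n : ℤ} (hn : 1 ≤ n) {u : M}
    (hu : ∀ i : ℤ, n ≤ i → ⁅V.L i, u⁆ = 0) {i : ℤ} (hi : n ≤ i) {k : ℕ} {W : ℤ} :
    ∀ w ∈ G V n u k W, ⁅V.L i, w⁆ ∈ G V n u k W := by
  apply lie_span_le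
  rintro w ⟨c, m, h1, h2, h3, h4, rfl⟩
  rw [CfComm V h1]
  have h5 := ACT V hp hn hu m i h3
  rw [if_pos hi] at h5
  have h7 := CfPUSH V h1 _ h5
  exact Gmono V (by omega) (by omega) h7

lemma NORM (hp : 2 ≤ p) {n : ℤ} (hn : 1 ≤ n) {u : M}
    (hu : ∀ i : ℤ, n ≤ i → ⁅V.L i, u⁆ = 0) :
    ∀ m : List ℤ, P V m u ∈ G V n u m.length m.sum := by
  intro m
  induction m with
  | nil => exact Submodule.subset_span ⟨[], [], by simp, by simp, by simp, by simp, rfl⟩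
  | cons a m1 ih =>
    have h := ACTG V hp hn hu a _ ih
    rw [P_cons]
    refine Gmono V (by simp) (le_of_eq ?_) h
    simp [List.sum_cons]; ring

lemma GfinDim {n : ℤ} (hn : 1 ≤ n) (u : M) (k : ℕ) (W : ℤ) :
    FiniteDimensional ℂ (G V n u k W) := by
  apply FiniteDimensional.span_of_finite
  have hC : ({t : ℕ | t ≤ p / 2} : Set ℕ).Finite := Set.finite_Iic (p / 2)
  have hM : (Set.Icc (W - (k : ℤ) * (n - 1)) (n - 1)).Finite := Set.finite_Icc _ _
  apply Set.Finite.subset (Set.Finite.biUnion (listFin _ hC k)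
    (fun c _ => ((listFin _ hM k).image (fun m => Cf V c (P V m u)))))
  rintro w ⟨c, m, h1, h2, h3, h4, rfl⟩
  apply Set.mem_biUnion (show c ∈ {l : List ℕ | l.length ≤ k ∧ ∀ x ∈ l, x ∈ {t : ℕ | t ≤ p / 2}}
    from ⟨by omega, h1⟩)
  refine ⟨m, ⟨by omega, ?_⟩, rfl⟩
  intro j hj
  obtain ⟨l1, l2, rfl⟩ := List.append_of_mem hj
  have e1 : l1.sum ≤ (l1.length : ℤ) * (n - 1) :=
    sum_le_of_entries_le _ l1 (fun x hx => by have := h3 x (by simp [hx]); omega)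
  have e2 : l2.sum ≤ (l2.length : ℤ) * (n - 1) :=
    sum_le_of_entries_le _ l2 (fun x hx => by have := h3 x (by simp [hx]); omega)
  have hlen : (l1.length : ℤ) + (l2.length : ℤ) ≤ (k : ℤ) := by
    simp only [List.length_append, List.length_cons] at h2
    omega
  have e3 : ((l1.length : ℤ) + (l2.length : ℤ)) * (n - 1) ≤ (k : ℤ) * (n - 1) :=
    mul_le_mul_of_nonneg_right hlen (by omega)
  rw [List.sum_append, List.sum_cons] at h4
  have hj2 : j < n := h3 j hj
  refine Set.mem_Icc.mpr ⟨?_, by omega⟩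
  nlinarith [e1, e2, e3, h4]

lemma lieL_mem (hp : 2 ≤ p) {n : ℤ} (hn : 1 ≤ n) {u : M}
    (hu : ∀ i : ℤ, n ≤ i → ⁅V.L i, u⁆ = 0) {k : ℕ} {W : ℤ} {z : M}
    (hz : z ∈ G V n u k W) {x : g}
    (hx : x ∈ Submodule.span ℂ {y : g | ∃ i : ℤ, n ≤ i ∧ y = V.L i}) :
    ⁅x, z⁆ ∈ G V n u k W := by
  induction hx using Submodule.span_induction with
  | mem y hy =>
    obtain ⟨i, hi, rfl⟩ := hy
    exact INV V hp hn hu hi z hz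
  | zero => rw [zero_lie]; exact Submodule.zero_mem _
  | add a b ha hb hpa hpb => rw [add_lie]; exact Submodule.add_mem _ hpa hpb
  | smul r a ha hpa => rw [smul_lie]; exact Submodule.smul_mem _ r hpa

lemma Tfold (hp : 2 ≤ p) {n : ℤ} (hn : 1 ≤ n) {u : M}
    (hu : ∀ i : ℤ, n ≤ i → ⁅V.L i, u⁆ = 0) {k : ℕ} {W : ℤ} {z : M}
    (hz : z ∈ G V n u k W) :
    ∀ l : List g, (∀ x ∈ l, x ∈ Submodule.span ℂ {y : g | ∃ i : ℤ, n ≤ i ∧ y = V.L i}) →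
      l.foldr (fun x z => ⁅x, z⁆) z ∈ G V n u k W := by
  intro l hl
  induction l with
  | nil => exact hz
  | cons x l' ih =>
    have h1 := ih (fun y hy => hl y (by simp [hy]))
    exact lieL_mem V hp hn hu h1 (hl x (by simp))

lemma foldr_add (l : List g) (w1 w2 : M) :
    l.foldr (fun x z => ⁅x, z⁆) (w1 + w2)
      = l.foldr (fun x z => ⁅x, z⁆) w1 + l.foldr (fun x z => ⁅x, z⁆) w2 := by
  induction l with
  | nil => rfl
  | cons x l' ih => simp only [List.foldr_cons, ih, lie_add]

lemma foldr_smul (l : List g) (r : ℂ) (w : M) :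
    l.foldr (fun x z => ⁅x, z⁆) (r • w) = r • l.foldr (fun x z => ⁅x, z⁆) w := by
  induction l with
  | nil => rfl
  | cons x l' ih => simp only [List.foldr_cons, ih, lie_smul]

lemma foldr_zero (l : List g) :
    l.foldr (fun x z => ⁅x, z⁆) (0 : M) = 0 := by
  induction l with
  | nil => rfl
  | cons x l' ih => simp only [List.foldr_cons, ih, lie_zero]

end GapVirasoroAux

open GapVirasoroAux in
/-- a simple `𝔏`-module containing a nonzero vector annihilated by all
`L_i` with `i ≥ n` (for some `n ∈ ℤ₊`) is a locally finite `𝔏^{(≥n)}`-module. -/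
theorem gapVirasoro_simple_annihilated_locallyFinite
    (p : ℕ) (hp : 2 ≤ p) (g : Type) [LieRing g] [LieAlgebra ℂ g] (V : GapVirasoro p g)
    (M : Type) [AddCommGroup M] [Module ℂ M] [LieRingModule g M] [LieModule ℂ g M]
    (hsimple : (∃ v : M, v ≠ 0) ∧ ∀ S : LieSubmodule ℂ g M, S = ⊥ ∨ S = ⊤)
    (n : ℤ) (hn : 1 ≤ n) (v : M) (hv : v ≠ 0)
    (hann : ∀ i : ℤ, n ≤ i → ⁅V.L i, v⁆ = 0) :
    ∀ w : M, FiniteDimensional ℂ (Submodule.span ℂ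
      {u : M | ∃ l : List g,
        (∀ x ∈ l, x ∈ Submodule.span ℂ {y : g | ∃ i : ℤ, n ≤ i ∧ y = V.L i}) ∧
        u = l.foldr (fun x z => ⁅x, z⁆) w}) := by
  intro w
  -- the Lie submodule generated by `v`
  set D0 : Submodule ℂ M := Submodule.span ℂ
    {z : M | ∃ c : List ℕ, ∃ m : List ℤ, (∀ t ∈ c, t ≤ p / 2) ∧ z = Cf V c (P V m v)}
    with hD0def
  have hstab : ∀ z ∈ D0, ∀ x : g, ⁅x, z⁆ ∈ D0 := by
    intro z hz
    induction hz using Submodule.span_induction with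
    | mem z hz =>
      intro x
      have hx : x ∈ Submodule.span ℂ (Set.range V.basis) := by
        rw [Module.Basis.span_eq]; exact Submodule.mem_top
      induction hx using Submodule.span_induction with
      | mem y hy =>
        obtain ⟨ind, rfl⟩ := hy
        obtain ⟨c, m, hc, rfl⟩ := hz
        cases ind with
        | inl a =>
          rw [V.basis_L, CfComm V hc]
          exact Submodule.subset_span ⟨c, a :: m, hc, rfl⟩
        | inr i =>
          rw [V.basis_C]
          refine Submodule.subset_span ⟨(i : ℕ) :: c, m, ?_, rfl⟩
          intro t ht
          rcases List.mem_cons.mp ht with h | h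
          · subst h; exact Nat.lt_succ_iff.mp i.isLt
          · exact hc t h
      | zero => rw [zero_lie]; exact Submodule.zero_mem _
      | add a b ha hb hpa hpb => rw [add_lie]; exact Submodule.add_mem _ hpa hpb
      | smul r a ha hpa => rw [smul_lie]; exact Submodule.smul_mem _ r hpa
    | zero => intro x; rw [lie_zero]; exact Submodule.zero_mem _
    | add z1 z2 h1 h2 hp1 hp2 => intro x; rw [lie_add]; exact Submodule.add_mem _ (hp1 x) (hp2 x)
    | smul r z1 h1 hp1 => intro x; rw [lie_smul]; exact Submodule.smul_mem _ r (hp1 x)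
  let D : LieSubmodule ℂ g M :=
    { toSubmodule := D0, lie_mem := fun {x} {m} hm => hstab m hm x }
  have hvD : v ∈ D0 := Submodule.subset_span ⟨[], [], by simp, rfl⟩
  have htop : D = ⊤ := by
    rcases hsimple.2 D with h | h
    · exfalso
      apply hv
      have hvd : v ∈ D := hvD
      rw [h] at hvd
      exact (LieSubmodule.mem_bot v).mp hvd
    · exact h
  have hwD : w ∈ D0 := by
    have : w ∈ D := by rw [htop]; exact LieSubmodule.mem_top w
    exact this
  -- locally finite on the generated submodule
  have key : ∀ z ∈ D0, FiniteDimensional ℂ (Submodule.span ℂ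
      {u : M | ∃ l : List g,
        (∀ x ∈ l, x ∈ Submodule.span ℂ {y : g | ∃ i : ℤ, n ≤ i ∧ y = V.L i}) ∧
        u = l.foldr (fun x z => ⁅x, z⁆) z}) := by
    intro z hz
    induction hz using Submodule.span_induction with
    | mem z hz =>
      obtain ⟨c, m, hc, rfl⟩ := hz
      have hg : Cf V c (P V m v) ∈ G V n v (m.length + c.length) m.sum :=
        CfPUSH V hc _ (NORM V hp hn hann m)
      haveI := GfinDim V hn v (m.length + c.length) m.sum
      apply Submodule.finiteDimensional_of_le
        (S₂ := G V n v (m.length + c.length) m.sum)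
      rw [Submodule.span_le]
      rintro u' ⟨l, hl, rfl⟩
      exact Tfold V hp hn hann hg l hl
    | zero =>
      apply Submodule.finiteDimensional_of_le (S₂ := (⊥ : Submodule ℂ M))
      rw [Submodule.span_le]
      rintro u' ⟨l, hl, rfl⟩
      simp [foldr_zero]
    | add z1 z2 h1 h2 ih1 ih2 =>
      haveI := ih1
      haveI := ih2
      apply Submodule.finiteDimensional_of_le
        (S₂ := Submodule.span ℂ {u : M | ∃ l : List g,
            (∀ x ∈ l, x ∈ Submodule.span ℂ {y : g | ∃ i : ℤ, n ≤ i ∧ y = V.L i}) ∧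
            u = l.foldr (fun x z => ⁅x, z⁆) z1} ⊔
          Submodule.span ℂ {u : M | ∃ l : List g,
            (∀ x ∈ l, x ∈ Submodule.span ℂ {y : g | ∃ i : ℤ, n ≤ i ∧ y = V.L i}) ∧
            u = l.foldr (fun x z => ⁅x, z⁆) z2})
      rw [Submodule.span_le]
      rintro u' ⟨l, hl, rfl⟩
      rw [foldr_add]
      exact Submodule.add_mem_sup (Submodule.subset_span ⟨l, hl, rfl⟩)
        (Submodule.subset_span ⟨l, hl, rfl⟩)
    | smul r z1 h1 ih1 =>
      haveI := ih1
      apply Submodule.finiteDimensional_of_le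
        (S₂ := Submodule.span ℂ {u : M | ∃ l : List g,
            (∀ x ∈ l, x ∈ Submodule.span ℂ {y : g | ∃ i : ℤ, n ≤ i ∧ y = V.L i}) ∧
            u = l.foldr (fun x z => ⁅x, z⁆) z1})
      rw [Submodule.span_le]
      rintro u' ⟨l, hl, rfl⟩
      rw [foldr_smul]
      exact Submodule.smul_mem _ r (Submodule.subset_span ⟨l, hl, rfl⟩)
  exact key w hwD
end

section
/- Let m ∈ ℤ₊ and let V be a nonzero 𝔏-module such that every L_i with i ≥ m acts locally nilpotently on V. Then there exists a nonzero vector v ∈ V with L_i v = 0 for all i ≥ m. -/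
section Helpers

variable {p : ℕ} {g : Type} [LieRing g] [LieAlgebra ℂ g] (V : GapVirasoro p g)
variable {M : Type} [AddCommGroup M] [Module ℂ M] [LieRingModule g M] [LieModule ℂ g M]

lemma GapVirasoro.bracket_general (i j : ℤ) (hi : 0 < i) (hj : 0 < j) :
    ∃ c : ℂ, ⁅V.L i, V.L j⁆ = c • V.L (i + j) := by
  have hij : i + j ≠ 0 := by omega
  by_cases hpi : (p : ℤ) ∣ i <;> by_cases hpj : (p : ℤ) ∣ j
  · exact ⟨(j : ℂ) - i, by rw [V.bracket_LL i j hpi hpj, if_neg hij, zero_smul, add_zero]⟩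
  · exact ⟨(j : ℂ), V.bracket_Lr i j hpi hpj⟩
  · refine ⟨-(i : ℂ), ?_⟩
    rw [← lie_skew, V.bracket_Lr j i hpj hpi, add_comm j i]
    exact (neg_smul _ _).symm
  · refine ⟨0, ?_⟩
    rw [V.bracket_rr i j hpi hpj, if_neg hij, zero_smul, zero_smul]

lemma GapVirasoro.bracket_pdvd (a x : ℤ) (ha : 0 < a) (hpa : (p : ℤ) ∣ a)
    (hx : 0 < x) (hxa : x ≠ a) :
    ∃ c : ℂ, c ≠ 0 ∧ ⁅V.L a, V.L x⁆ = c • V.L (a + x) := by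
  by_cases hpx : (p : ℤ) ∣ x
  · refine ⟨((x - a : ℤ) : ℂ), Int.cast_ne_zero.mpr (sub_ne_zero.mpr hxa), ?_⟩
    rw [V.bracket_LL a x hpa hpx, if_neg (by omega : ¬ a + x = 0), zero_smul, add_zero]
    norm_cast
  · exact ⟨(x : ℂ), Int.cast_ne_zero.mpr hx.ne', V.bracket_Lr a x hpa hpx⟩

omit [Module ℂ M] in
lemma exists_top_iterate {f : M → M} {v : M} (hv : v ≠ 0) (h : ∃ s : ℕ, f^[s] v = 0) :
    ∃ t : ℕ, f^[t] v ≠ 0 ∧ f (f^[t] v) = 0 := by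
  classical
  have h0 : Nat.find h ≠ 0 := by
    intro e
    have hs := Nat.find_spec h
    rw [e, Function.iterate_zero_apply] at hs
    exact hv hs
  refine ⟨Nat.find h - 1, Nat.find_min h (by omega), ?_⟩
  have hs : f^[(Nat.find h - 1) + 1] v = 0 := by
    rw [Nat.sub_add_cancel (by omega)]; exact Nat.find_spec h
  rw [Function.iterate_succ_apply'] at hs
  exact hs

lemma GapVirasoro.descend (N : ℤ) (hN : 1 ≤ N)
    (hnilN : ∀ v : M, ∃ s : ℕ, (fun w : M => ⁅V.L N, w⁆)^[s] v = 0)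
    (v : M) (hv : v ≠ 0) (hkill : ∀ i : ℤ, N + 1 ≤ i → ⁅V.L i, v⁆ = 0) :
    ∃ w : M, w ≠ 0 ∧ ∀ i : ℤ, N ≤ i → ⁅V.L i, w⁆ = 0 := by
  have key : ∀ (t : ℕ) (i : ℤ), N + 1 ≤ i →
      ⁅V.L i, (fun w : M => ⁅V.L N, w⁆)^[t] v⁆ = 0 := by
    intro t
    induction t with
    | zero => intro i hi; simpa using hkill i hi
    | succ t ih =>
      intro i hi
      rw [Function.iterate_succ_apply']
      obtain ⟨c, hc⟩ := V.bracket_general i N (by omega) (by omega)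
      show ⁅V.L i, ⁅V.L N, (fun w : M => ⁅V.L N, w⁆)^[t] v⁆⁆ = 0
      rw [leibniz_lie, hc, smul_lie, ih (i + N) (by omega), smul_zero, ih i hi, lie_zero,
        add_zero]
  obtain ⟨t, ht0, htop⟩ := exists_top_iterate hv (hnilN v)
  refine ⟨_, ht0, fun i hi => ?_⟩
  rcases eq_or_lt_of_le hi with h | h
  · rw [← h]; exact htop
  · exact key t i (by omega)

lemma GapVirasoro.exists_tail (a : ℤ) (ha : 0 < a) (hpa : (p : ℤ) ∣ a)
    (hnila : ∀ v : M, ∃ s : ℕ, (fun w : M => ⁅V.L a, w⁆)^[s] v = 0)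
    (v0 : M) (hv0 : v0 ≠ 0) :
    ∃ (w : M) (N : ℤ), w ≠ 0 ∧ ∀ i : ℤ, N ≤ i → ⁅V.L i, w⁆ = 0 := by
  classical
  obtain ⟨t, hw0, hwtop⟩ := exists_top_iterate hv0 (hnila v0)
  set w : M := (fun u : M => ⁅V.L a, u⁆)^[t] v0 with hwdef
  have hLaw : ⁅V.L a, w⁆ = 0 := hwtop
  have iter : ∀ (k : ℕ) (j : ℤ), a < j →
      ∃ c : ℂ, c ≠ 0 ∧ (fun u : M => ⁅V.L a, u⁆)^[k] ⁅V.L j, w⁆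
        = c • ⁅V.L (j + (k : ℤ) * a), w⁆ := by
    intro k
    induction k with
    | zero => intro j hj; exact ⟨1, one_ne_zero, by simp⟩
    | succ k ih =>
      intro j hj
      obtain ⟨c, hc0, hc⟩ := ih j hj
      have hknn : (0 : ℤ) ≤ (k : ℤ) * a := mul_nonneg (by omega) ha.le
      have hx : (0 : ℤ) < j + (k : ℤ) * a := by linarith
      have hxa : j + (k : ℤ) * a ≠ a := by intro e; linarith [e.ge]
      obtain ⟨c', hc'0, hc'⟩ := V.bracket_pdvd a (j + (k : ℤ) * a) ha hpa hx hxa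
      refine ⟨c' * c, mul_ne_zero hc'0 hc0, ?_⟩
      rw [Function.iterate_succ_apply', hc]
      show ⁅V.L a, c • ⁅V.L (j + (k : ℤ) * a), w⁆⁆ = _
      rw [lie_smul, leibniz_lie, hLaw, lie_zero, add_zero, hc', smul_lie, smul_smul]
      have hidx : a + (j + (k : ℤ) * a) = j + ((k + 1 : ℕ) : ℤ) * a := by push_cast; ring
      rw [hidx, mul_comm c c']
  have perj : ∀ j : ℤ, a < j → ∃ K : ℕ, ∀ k : ℕ, K ≤ k →
      ⁅V.L (j + (k : ℤ) * a), w⁆ = 0 := by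
    intro j hj
    obtain ⟨s, hs⟩ := hnila ⁅V.L j, w⁆
    refine ⟨s, fun k hk => ?_⟩
    obtain ⟨c, hc0, hc⟩ := iter k j hj
    have hz : (fun u : M => ⁅V.L a, u⁆)^[k] ⁅V.L j, w⁆ = 0 := by
      have he : k = (k - s) + s := by omega
      rw [he, Function.iterate_add_apply, hs]
      exact Function.iterate_fixed (by simp) (k - s)
    rw [hz] at hc
    exact ((smul_eq_zero.mp hc.symm).resolve_left hc0)
  choose! K hK using perj
  set Km : ℕ := (Finset.Icc (a + 1) (2 * a)).sup K with hKm
  refine ⟨w, a + 1 + a * (Km : ℤ), hw0, ?_⟩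
  intro i hi
  set q : ℤ := (i - a - 1) / a with hqdef
  set r : ℤ := (i - a - 1) % a with hrdef
  have h3 : a * q + r = i - a - 1 := Int.mul_ediv_add_emod _ _
  have h1 : 0 ≤ r := Int.emod_nonneg _ ha.ne'
  have h2 : r < a := Int.emod_lt_of_pos _ ha
  have hkq : (Km : ℤ) ≤ q := by
    by_contra hlt
    push_neg at hlt
    have hle : a * q ≤ a * ((Km : ℤ) - 1) := by
      apply mul_le_mul_of_nonneg_left (by omega) ha.le
    have hexp : a * ((Km : ℤ) - 1) = a * (Km : ℤ) - a := by ring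
    linarith [h3, h1, h2, hi]
  have hq0 : 0 ≤ q := le_trans (by omega) hkq
  set j : ℤ := a + 1 + r with hjdef
  have hij : i = j + q * a := by
    have := mul_comm a q
    linarith [h3]
  have hjmem : j ∈ Finset.Icc (a + 1) (2 * a) := Finset.mem_Icc.mpr ⟨by omega, by omega⟩
  have hKj : ((K j : ℕ) : ℤ) ≤ q := le_trans (by exact_mod_cast Finset.le_sup hjmem) hkq
  have hres := hK j (by omega) q.toNat (by omega)
  rw [Int.toNat_of_nonneg hq0] at hres
  rw [hij]
  exact hres

end Helpers

/-- if every `L_i` with `i ≥ m` acts locally nilpotently on a nonzero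
`𝔏`-module `M`, then some nonzero vector is annihilated by all `L_i` with `i ≥ m`
(for the same `m`). -/
theorem gapVirasoro_locallyNilpotent_annihilated_same_m
    (p : ℕ) (hp : 2 ≤ p) (g : Type) [LieRing g] [LieAlgebra ℂ g] (V : GapVirasoro p g)
    (M : Type) [AddCommGroup M] [Module ℂ M] [LieRingModule g M] [LieModule ℂ g M]
    (hM : ∃ v : M, v ≠ 0) (m : ℤ) (hm : 1 ≤ m)
    (hnil : ∀ i : ℤ, m ≤ i → ∀ v : M, ∃ s : ℕ, (fun w : M => ⁅V.L i, w⁆)^[s] v = 0) :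
    ∃ v : M, v ≠ 0 ∧ ∀ i : ℤ, m ≤ i → ⁅V.L i, v⁆ = 0 := by
  obtain ⟨v0, hv0⟩ := hM
  have hp2 : (2 : ℤ) ≤ (p : ℤ) := by exact_mod_cast hp
  set a : ℤ := (p : ℤ) * m with hadef
  have ha : 0 < a := by positivity
  have ham : m ≤ a := by nlinarith
  have hpa : (p : ℤ) ∣ a := ⟨m, rfl⟩
  obtain ⟨w, N, hw, htail⟩ := V.exists_tail a ha hpa (hnil a ham) v0 hv0
  have main : ∀ d : ℕ, ∃ v : M, v ≠ 0 ∧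
      ∀ i : ℤ, max m (N - (d : ℤ)) ≤ i → ⁅V.L i, v⁆ = 0 := by
    intro d
    induction d with
    | zero => exact ⟨w, hw, fun i hi => htail i (by omega)⟩
    | succ d ih =>
      obtain ⟨v, hv, hkill⟩ := ih
      by_cases hc : m ≤ N - ((d : ℤ) + 1)
      · obtain ⟨u, hu, hukill⟩ := V.descend (N - ((d : ℤ) + 1)) (by omega) (hnil _ hc) v hv
          (fun i hi => hkill i (by omega))
        exact ⟨u, hu, fun i hi => hukill i (by push_cast at hi; omega)⟩
      · exact ⟨v, hv, fun i hi => hkill i (by push_cast at hi; omega)⟩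
  obtain ⟨v, hv, hfin⟩ := main (N - m).toNat
  exact ⟨v, hv, fun i hi => hfin i (by omega)⟩
end

section
/- Let d = (d_1,…,d_{p−1}) ∈ ℤ^{p−1} be such that the set S = {i : 1 ≤ i ≤ p−1, d_i ≤ 0} is nonempty, let S̄ = {1,…,p−1}∖S, let θ_i (i ∈ S) and η_j (j ∈ S̄) be nonzero complex numbers, and let ℓ_0 ∈ ℂ. Let J be the left ideal of U(𝔏⁺(d)) generated by the elements L_{i−p·d_i} − θ_i for i ∈ S, L_{r−p·d_r} − η_r for r ∈ S̄, L_{pj} for j ∈ ℤ₊, L_{t+ps} for 1 ≤ t ≤ p−1 and s > −d_t, C_0 − p²·ℓ_0, and C_1,…,C_⌊p/2⌋. Then the quotient R = U(𝔏⁺(d))/J is a simple 𝔏⁺(d)-module. -/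
/-- The generating set of the subalgebra `𝔏⁺(d)`:
`{L_{pi} : i ∈ ℕ} ∪ {L_{j+p(i−d_j)} : i ∈ ℕ, 1 ≤ j ≤ p−1} ∪ {C_k : 0 ≤ k ≤ ⌊p/2⌋}`. -/
def GapVirasoro.LplusSet {p : ℕ} {g : Type} [LieRing g] [LieAlgebra ℂ g]
    (V : GapVirasoro p g) (d : ℕ → ℤ) : Set g :=
  {x | (∃ i : ℕ, x = V.L ((p : ℤ) * i)) ∨
       (∃ j i : ℕ, 1 ≤ j ∧ j ≤ p - 1 ∧ x = V.L ((j : ℤ) + (p : ℤ) * ((i : ℤ) - d j))) ∨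
       (∃ k : ℕ, k ≤ p / 2 ∧ x = V.C k)}

/-- The Lie subalgebra `𝔏⁺(d)` of `𝔏`. -/
def GapVirasoro.Lplus {p : ℕ} {g : Type} [LieRing g] [LieAlgebra ℂ g]
    (V : GapVirasoro p g) (d : ℕ → ℤ) : LieSubalgebra ℂ g :=
  LieSubalgebra.lieSpan ℂ g (V.LplusSet d)

namespace GapVirasoro

variable {p : ℕ} {g : Type} [LieRing g] [LieAlgebra ℂ g]

lemma L_mul_mem_Lplus (V : GapVirasoro p g) (d : ℕ → ℤ) (i : ℕ) :
    V.L ((p : ℤ) * i) ∈ V.Lplus d :=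
  LieSubalgebra.subset_lieSpan (Or.inl ⟨i, rfl⟩)

lemma L_shift_mem_Lplus (V : GapVirasoro p g) (d : ℕ → ℤ) (j l : ℕ)
    (hj1 : 1 ≤ j) (hj2 : j ≤ p - 1) :
    V.L ((j : ℤ) + (p : ℤ) * ((l : ℤ) - d j)) ∈ V.Lplus d :=
  LieSubalgebra.subset_lieSpan (Or.inr (Or.inl ⟨j, l, hj1, hj2, rfl⟩))

lemma L_shift_mem_Lplus' (V : GapVirasoro p g) (d : ℕ → ℤ) (j : ℕ) (z : ℤ)
    (hj1 : 1 ≤ j) (hj2 : j ≤ p - 1) (hz : -d j ≤ z) :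
    V.L ((j : ℤ) + (p : ℤ) * z) ∈ V.Lplus d := by
  have h0 : (0 : ℤ) ≤ z + d j := by omega
  have hz' : (( (z + d j).toNat : ℤ) - d j) = z := by omega
  have := V.L_shift_mem_Lplus d j (z + d j).toNat hj1 hj2
  rwa [hz'] at this

lemma C_mem_Lplus (V : GapVirasoro p g) (d : ℕ → ℤ) (i : ℕ) (hi : i ≤ p / 2) :
    V.C i ∈ V.Lplus d :=
  LieSubalgebra.subset_lieSpan (Or.inr (Or.inr ⟨i, hi, rfl⟩))

/-- The image in `U(𝔏⁺(d))` of an element of `𝔏⁺(d)`. -/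
noncomputable def uel (V : GapVirasoro p g) (d : ℕ → ℤ) (x : g) (hx : x ∈ V.Lplus d) :
    UniversalEnvelopingAlgebra ℂ (V.Lplus d) :=
  UniversalEnvelopingAlgebra.ι ℂ (⟨x, hx⟩ : V.Lplus d)

end GapVirasoro

open Polynomial UniversalEnvelopingAlgebra

noncomputable section Aux

attribute [local instance 100] LieRing.ofAssociativeRing

/-- Shift operator `f ↦ f(X - a)` as a linear endomorphism of `ℂ[X]`. -/
def shiftE (a : ℂ) : Module.End ℂ (Polynomial ℂ) :=
  (Polynomial.aeval (Polynomial.X - Polynomial.C a)).toLinearMap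

/-- Multiplication by `X`. -/
def mulXE : Module.End ℂ (Polynomial ℂ) :=
  LinearMap.mulLeft ℂ (Polynomial.X : Polynomial ℂ)

lemma shiftE_apply (a : ℂ) (f : Polynomial ℂ) : shiftE a f = f.comp (X - C a) := by
  simp [shiftE, aeval_def, Polynomial.comp]

lemma mulXE_apply (f : Polynomial ℂ) : mulXE f = X * f := rfl

lemma shiftE_comp (a b : ℂ) : shiftE a ∘ₗ shiftE b = shiftE (a + b) := by
  apply LinearMap.ext; intro f
  simp only [LinearMap.comp_apply, shiftE_apply]
  rw [Polynomial.comp_assoc]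
  congr 1
  simp [sub_comp, sub_sub]

lemma mulX_shiftE_comm (a : ℂ) :
    mulXE ∘ₗ shiftE a - shiftE a ∘ₗ mulXE = a • shiftE a := by
  apply LinearMap.ext; intro f
  simp only [LinearMap.sub_apply, LinearMap.comp_apply, LinearMap.smul_apply,
    shiftE_apply, mulXE_apply, mul_comp, X_comp, smul_eq_C_mul]
  ring

lemma uea_induction {R : Type*} [CommRing R] {L : Type*} [LieRing L] [LieAlgebra R L]
    {C : UniversalEnvelopingAlgebra R L → Prop}
    (halg : ∀ r, C (algebraMap R (UniversalEnvelopingAlgebra R L) r))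
    (hι : ∀ x, C (UniversalEnvelopingAlgebra.ι R x))
    (hmul : ∀ a b, C a → C b → C (a * b))
    (hadd : ∀ a b, C a → C b → C (a + b))
    (a : UniversalEnvelopingAlgebra R L) : C a := by
  obtain ⟨t, rfl⟩ : ∃ t, UniversalEnvelopingAlgebra.mkAlgHom R L t = a :=
    RingCon.mkₐ_surjective (α := R) (UniversalEnvelopingAlgebra.ringCon R L) a
  induction t using TensorAlgebra.induction with
  | algebraMap r => rw [AlgHom.commutes]; exact halg r
  | ι x => exact hι x
  | mul a b ha hb => rw [map_mul]; exact hmul _ _ ha hb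
  | add a b ha hb => rw [map_add]; exact hadd _ _ ha hb

/-- Commutation of a "weight" element past a polynomial in `z`. -/
lemma mul_aeval_of_comm {A : Type*} [Ring A] [Algebra ℂ A] (x z : A) (c : ℂ)
    (h : x * z = z * x - c • x) (f : Polynomial ℂ) :
    x * (Polynomial.aeval z f) = (Polynomial.aeval z (f.comp (X - C c))) * x := by
  induction f using Polynomial.induction_on' with
  | add f g hf hg => simp [mul_add, add_mul, add_comp, hf, hg]
  | monomial n a =>
    have key : ∀ n : ℕ, x * z ^ n = (z - c • 1) ^ n * x := by
      intro n
      induction n with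
      | zero => simp
      | succ n ih =>
        rw [pow_succ, ← mul_assoc, ih, mul_assoc, h, pow_succ, mul_assoc]
        congr 1
        rw [sub_mul, smul_mul_assoc, one_mul]
    have h1 : (Polynomial.aeval z) (Polynomial.monomial n a) = algebraMap ℂ A a * z ^ n := by
      rw [← C_mul_X_pow_eq_monomial, map_mul, map_pow, aeval_C, aeval_X]
    have h2 : (Polynomial.aeval z) ((Polynomial.monomial n a).comp (X - C c)) =
        algebraMap ℂ A a * (z - algebraMap ℂ A c) ^ n := by
      rw [← C_mul_X_pow_eq_monomial, mul_comp, C_comp, X_pow_comp, map_mul, map_pow, aeval_C,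
        map_sub, aeval_X, aeval_C]
    have key' : x * z ^ n = (z - algebraMap ℂ A c) ^ n * x := by
      rw [key, Algebra.algebraMap_eq_smul_one]
    rw [h1, h2, ← mul_assoc, ← Algebra.commutes a x, mul_assoc, key', ← mul_assoc]


section Main

open Polynomial UniversalEnvelopingAlgebra GapVirasoro

variable {p : ℕ} {g : Type} [LieRing g] [LieAlgebra ℂ g]

lemma arith_ndvd {p : ℕ} (hp : 2 ≤ p) {j : ℕ} (s : ℤ) (hj1 : 1 ≤ j) (hj2 : j ≤ p - 1) :
    ¬ (p : ℤ) ∣ ((j : ℤ) + (p : ℤ) * s) := by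
  intro h
  rw [add_comm] at h
  have h2 : (p : ℤ) ∣ (j : ℤ) := (Int.dvd_add_right ⟨s, rfl⟩).mp h
  have h3 : (p : ℤ) ≤ (j : ℤ) := Int.le_of_dvd (by exact_mod_cast hj1) h2
  omega

lemma arith_emod {p : ℕ} (hp : 2 ≤ p) {j : ℕ} (s : ℤ) (hj1 : 1 ≤ j) (hj2 : j ≤ p - 1) :
    ((j : ℤ) + (p : ℤ) * s) % (p : ℤ) = (j : ℤ) := by
  rw [Int.add_mul_emod_self_left]
  apply Int.emod_eq_of_lt <;> omega

lemma arith_emod_toNat {p : ℕ} (hp : 2 ≤ p) {j : ℕ} (s : ℤ) (hj1 : 1 ≤ j) (hj2 : j ≤ p - 1) :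
    (((j : ℤ) + (p : ℤ) * s) % (p : ℤ)).toNat = j := by
  rw [arith_emod hp s hj1 hj2]; simp

lemma arith_ediv {p : ℕ} (hp : 2 ≤ p) {j : ℕ} (s : ℤ) (hj1 : 1 ≤ j) (hj2 : j ≤ p - 1) :
    ((j : ℤ) + (p : ℤ) * s) / (p : ℤ) = s := by
  rw [Int.add_mul_ediv_left _ _ (by omega : (p : ℤ) ≠ 0)]
  rw [Int.ediv_eq_zero_of_lt (by omega) (by omega)]
  omega

/-- the scalar attached to the lowest generator in congruence class `j`. -/
def cval (d : ℕ → ℤ) (θ η : ℕ → ℂ) (j : ℕ) : ℂ := if d j ≤ 0 then θ j else η j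

/-- The action of basis vectors on `ℂ[X]`. -/
noncomputable def Fend (p : ℕ) (d : ℕ → ℤ) (ℓ0 : ℂ) (θ η : ℕ → ℂ) :
    ℤ ⊕ Fin (p / 2 + 1) → Module.End ℂ (Polynomial ℂ)
  | Sum.inl m =>
    if (p : ℤ) ∣ m then (if m = 0 then mulXE else 0)
    else if m / (p : ℤ) = - d ((m % (p : ℤ)).toNat)
      then (cval d θ η ((m % (p : ℤ)).toNat)) • shiftE (m : ℂ)
      else 0
  | Sum.inr i => if (i : ℕ) = 0 then ((p : ℂ) ^ 2 * ℓ0) • 1 else 0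

/-- The representation of `g` (as a linear map) on `ℂ[X]`. -/
noncomputable def rho (V : GapVirasoro p g) (d : ℕ → ℤ) (ℓ0 : ℂ) (θ η : ℕ → ℂ) :
    g →ₗ[ℂ] Module.End ℂ (Polynomial ℂ) :=
  V.basis.constr ℂ (Fend p d ℓ0 θ η)

variable (V : GapVirasoro p g) (d : ℕ → ℤ) (ℓ0 : ℂ) (θ η : ℕ → ℂ)

lemma rho_L (m : ℤ) : rho V d ℓ0 θ η (V.L m) = Fend p d ℓ0 θ η (Sum.inl m) := by
  rw [← V.basis_L m, rho, Module.Basis.constr_basis]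

lemma rho_C (k : ℕ) (hk : k ≤ p / 2) :
    rho V d ℓ0 θ η (V.C k) = Fend p d ℓ0 θ η (Sum.inr ⟨k, by omega⟩) := by
  have : V.C k = V.basis (Sum.inr ⟨k, by omega⟩) := (V.basis_C ⟨k, by omega⟩).symm
  rw [this, rho, Module.Basis.constr_basis]

lemma rho_L0 : rho V d ℓ0 θ η (V.L 0) = mulXE := by
  rw [rho_L, Fend, if_pos ⟨0, by ring⟩, if_pos rfl]

lemma rho_Lpi (hp : 2 ≤ p) (i : ℕ) (hi : 1 ≤ i) :
    rho V d ℓ0 θ η (V.L ((p : ℤ) * (i : ℕ))) = 0 := by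
  rw [rho_L, Fend, if_pos ⟨(i : ℤ), rfl⟩, if_neg (by positivity)]

lemma rho_Lr (hp : 2 ≤ p) (j : ℕ) (s : ℤ) (hj1 : 1 ≤ j) (hj2 : j ≤ p - 1) :
    rho V d ℓ0 θ η (V.L ((j : ℤ) + (p : ℤ) * s)) =
      if s = - d j then (cval d θ η j) • shiftE (((j : ℤ) + (p : ℤ) * s : ℤ) : ℂ) else 0 := by
  rw [rho_L, Fend, if_neg (arith_ndvd hp s hj1 hj2), arith_emod_toNat hp s hj1 hj2,
    arith_ediv hp s hj1 hj2]

lemma rho_C0 : rho V d ℓ0 θ η (V.C 0) = ((p : ℂ) ^ 2 * ℓ0) • 1 := by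
  rw [rho_C V d ℓ0 θ η 0 (Nat.zero_le _), Fend, if_pos rfl]

lemma rho_Ck (k : ℕ) (hk1 : 1 ≤ k) (hk2 : k ≤ p / 2) :
    rho V d ℓ0 θ η (V.C k) = 0 := by
  rw [rho_C V d ℓ0 θ η k hk2, Fend, if_neg (by simp only [Fin.val_mk]; omega)]

end Main


section Main2

open Polynomial UniversalEnvelopingAlgebra GapVirasoro

variable {p : ℕ} {g : Type} [LieRing g] [LieAlgebra ℂ g]
variable (V : GapVirasoro p g) (d : ℕ → ℤ) (ℓ0 : ℂ) (θ η : ℕ → ℂ)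

lemma lie_shiftE (a b : ℂ) : ⁅shiftE a, shiftE b⁆ = 0 := by
  rw [Ring.lie_def, Module.End.mul_eq_comp, Module.End.mul_eq_comp, shiftE_comp, shiftE_comp,
    add_comm, sub_self]

lemma lie_mulXE_shiftE (a : ℂ) : ⁅mulXE, shiftE a⁆ = a • shiftE a := by
  rw [Ring.lie_def, Module.End.mul_eq_comp, Module.End.mul_eq_comp]
  exact mulX_shiftE_comm a

lemma lie_smul_one_left (c : ℂ) (f : Module.End ℂ (Polynomial ℂ)) :
    ⁅c • (1 : Module.End ℂ (Polynomial ℂ)), f⁆ = 0 := by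
  rw [Ring.lie_def, smul_mul_assoc, mul_smul_comm, one_mul, mul_one, sub_self]

lemma lie_smulsh (c c' a b : ℂ) :
    ⁅c • shiftE a, c' • shiftE b⁆ = (0 : Module.End ℂ (Polynomial ℂ)) := by
  rw [Ring.lie_def, smul_mul_assoc, smul_mul_assoc, mul_smul_comm, mul_smul_comm,
    Module.End.mul_eq_comp, Module.End.mul_eq_comp, shiftE_comp, shiftE_comp, add_comm b a,
    smul_comm c' c, sub_self]

lemma lie_mulXE_smul_shiftE (c a : ℂ) :
    ⁅mulXE, c • shiftE a⁆ = c • (a • shiftE a) := by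
  rw [Ring.lie_def, mul_smul_comm, smul_mul_assoc]
  calc c • (mulXE * shiftE a) - c • (shiftE a * mulXE)
      = c • (mulXE * shiftE a - shiftE a * mulXE) := by rw [smul_sub]
    _ = c • (a • shiftE a) := by rw [← Ring.lie_def, lie_mulXE_shiftE]

lemma rho_br_AA (hp : 2 ≤ p) (i i' : ℕ) :
    rho V d ℓ0 θ η ⁅V.L ((p : ℤ) * (i : ℕ)), V.L ((p : ℤ) * (i' : ℕ))⁆ =
      ⁅rho V d ℓ0 θ η (V.L ((p : ℤ) * (i : ℕ))), rho V d ℓ0 θ η (V.L ((p : ℤ) * (i' : ℕ)))⁆ := by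
  rw [V.bracket_LL _ _ ⟨(i : ℤ), rfl⟩ ⟨(i' : ℤ), rfl⟩, map_add, map_smul, map_smul]
  rcases Nat.eq_zero_or_pos i with hi | hi
  · rcases Nat.eq_zero_or_pos i' with hi' | hi'
    · subst hi hi'
      norm_num [lie_self, rho_L0]
    · subst hi
      have hne : (p : ℤ) * (0 : ℕ) + (p : ℤ) * (i' : ℕ) ≠ 0 := by
        simp only [Nat.cast_zero, mul_zero, zero_add]
        exact mul_ne_zero (by exact_mod_cast (by omega : p ≠ 0))
          (by exact_mod_cast (by omega : i' ≠ 0))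
      rw [if_neg hne, zero_smul, add_zero]
      simp only [Nat.cast_zero, mul_zero, zero_add]
      rw [rho_L0, rho_Lpi V d ℓ0 θ η hp i' hi']
      simp [lie_zero]
  · rcases Nat.eq_zero_or_pos i' with hi' | hi'
    · subst hi'
      have hne : (p : ℤ) * (i : ℕ) + (p : ℤ) * (0 : ℕ) ≠ 0 := by
        simp only [Nat.cast_zero, mul_zero, add_zero]
        exact mul_ne_zero (by exact_mod_cast (by omega : p ≠ 0))
          (by exact_mod_cast (by omega : i ≠ 0))
      rw [if_neg hne, zero_smul, add_zero]
      simp only [Nat.cast_zero, mul_zero, add_zero]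
      rw [rho_L0, rho_Lpi V d ℓ0 θ η hp i hi]
      simp [zero_lie]
    · have hne : (p : ℤ) * (i : ℕ) + (p : ℤ) * (i' : ℕ) ≠ 0 := by
        have h1 : (0 : ℤ) < (p : ℤ) * (i : ℕ) := by
          apply mul_pos <;> exact_mod_cast (by omega : 0 < _)
        have h2 : (0 : ℤ) < (p : ℤ) * (i' : ℕ) := by
          apply mul_pos <;> exact_mod_cast (by omega : 0 < _)
        omega
      have hidx : (p : ℤ) * (i : ℕ) + (p : ℤ) * (i' : ℕ) = (p : ℤ) * ((i + i' : ℕ) : ℤ) := by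
        push_cast; ring
      rw [if_neg hne, zero_smul, add_zero, hidx]
      rw [rho_Lpi V d ℓ0 θ η hp i hi, rho_Lpi V d ℓ0 θ η hp i' hi',
        rho_Lpi V d ℓ0 θ η hp (i + i') (by omega)]
      simp [lie_zero]

lemma rho_br_AB (hp : 2 ≤ p) (i j : ℕ) (s : ℤ) (hj1 : 1 ≤ j) (hj2 : j ≤ p - 1)
    (hs : -d j ≤ s) :
    rho V d ℓ0 θ η ⁅V.L ((p : ℤ) * (i : ℕ)), V.L ((j : ℤ) + (p : ℤ) * s)⁆ =
      ⁅rho V d ℓ0 θ η (V.L ((p : ℤ) * (i : ℕ))),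
       rho V d ℓ0 θ η (V.L ((j : ℤ) + (p : ℤ) * s))⁆ := by
  have hnd := arith_ndvd hp s hj1 hj2
  rw [V.bracket_Lr _ _ ⟨(i : ℤ), rfl⟩ hnd, map_smul]
  have hidx : (p : ℤ) * (i : ℕ) + ((j : ℤ) + (p : ℤ) * s) = (j : ℤ) + (p : ℤ) * (s + (i : ℕ)) := by
    ring
  rw [hidx, rho_Lr V d ℓ0 θ η hp j (s + (i : ℕ)) hj1 hj2]
  rcases Nat.eq_zero_or_pos i with hi | hi
  · subst hi
    simp only [Nat.cast_zero, add_zero, mul_zero]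
    rw [rho_L0, rho_Lr V d ℓ0 θ η hp j s hj1 hj2]
    by_cases hs0 : s = -d j
    · rw [if_pos hs0, lie_mulXE_smul_shiftE, smul_comm]
    · rw [if_neg hs0, smul_zero, lie_zero]
  · rw [if_neg (by omega : ¬ s + (i : ℕ) = -d j), smul_zero,
      rho_Lpi V d ℓ0 θ η hp i hi, zero_lie]

lemma rho_br_BB (hp : 2 ≤ p) (j j' : ℕ) (s s' : ℤ) (hj1 : 1 ≤ j) (hj2 : j ≤ p - 1)
    (hj1' : 1 ≤ j') (hj2' : j' ≤ p - 1) :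
    rho V d ℓ0 θ η ⁅V.L ((j : ℤ) + (p : ℤ) * s), V.L ((j' : ℤ) + (p : ℤ) * s')⁆ =
      ⁅rho V d ℓ0 θ η (V.L ((j : ℤ) + (p : ℤ) * s)),
       rho V d ℓ0 θ η (V.L ((j' : ℤ) + (p : ℤ) * s'))⁆ := by
  have hnd := arith_ndvd hp s hj1 hj2
  have hnd' := arith_ndvd hp s' hj1' hj2'
  rw [V.bracket_rr _ _ hnd hnd', map_smul, arith_emod_toNat hp s hj1 hj2,
    rho_Ck V d ℓ0 θ η (min j (p - j)) (by omega) (by omega), smul_zero]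
  rw [rho_Lr V d ℓ0 θ η hp j s hj1 hj2, rho_Lr V d ℓ0 θ η hp j' s' hj1' hj2']
  split_ifs <;>
    simp [lie_smulsh, lie_zero, zero_lie]

lemma rho_br_Cleft (hp : 2 ≤ p) (k : ℕ) (hk : k ≤ p / 2) (y : g) :
    rho V d ℓ0 θ η ⁅V.C k, y⁆ = ⁅rho V d ℓ0 θ η (V.C k), rho V d ℓ0 θ η y⁆ := by
  rw [V.central_C k hk y, map_zero]
  rcases Nat.eq_zero_or_pos k with hk0 | hk0
  · subst hk0
    rw [rho_C0, lie_smul_one_left]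
  · rw [rho_Ck V d ℓ0 θ η k hk0 hk, zero_lie]

lemma rho_br_skew {x y : g}
    (h : rho V d ℓ0 θ η ⁅y, x⁆ = ⁅rho V d ℓ0 θ η y, rho V d ℓ0 θ η x⁆) :
    rho V d ℓ0 θ η ⁅x, y⁆ = ⁅rho V d ℓ0 θ η x, rho V d ℓ0 θ η y⁆ := by
  rw [← lie_skew x y, map_neg, h, lie_skew]

lemma rho_bracket_gen (hp : 2 ≤ p) :
    ∀ x ∈ V.LplusSet d, ∀ y ∈ V.LplusSet d,
      rho V d ℓ0 θ η ⁅x, y⁆ = ⁅rho V d ℓ0 θ η x, rho V d ℓ0 θ η y⁆ := by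
  rintro x hx y hy
  rcases hx with ⟨i, rfl⟩ | ⟨j, l, hj1, hj2, rfl⟩ | ⟨k, hk, rfl⟩
  · rcases hy with ⟨i', rfl⟩ | ⟨j', l', hj1', hj2', rfl⟩ | ⟨k', hk', rfl⟩
    · exact rho_br_AA V d ℓ0 θ η hp i i'
    · exact rho_br_AB V d ℓ0 θ η hp i j' ((l' : ℤ) - d j') hj1' hj2' (by omega)
    · exact rho_br_skew V d ℓ0 θ η (rho_br_Cleft V d ℓ0 θ η hp k' hk' _)
  · rcases hy with ⟨i', rfl⟩ | ⟨j', l', hj1', hj2', rfl⟩ | ⟨k', hk', rfl⟩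
    · exact rho_br_skew V d ℓ0 θ η
        (rho_br_AB V d ℓ0 θ η hp i' j ((l : ℤ) - d j) hj1 hj2 (by omega))
    · exact rho_br_BB V d ℓ0 θ η hp j j' _ _ hj1 hj2 hj1' hj2'
    · exact rho_br_skew V d ℓ0 θ η (rho_br_Cleft V d ℓ0 θ η hp k' hk' _)
  · exact rho_br_Cleft V d ℓ0 θ η hp k hk y

lemma bracket_gen_mem (hp : 2 ≤ p) :
    ∀ x ∈ V.LplusSet d, ∀ y ∈ V.LplusSet d,
      ⁅x, y⁆ ∈ Submodule.span ℂ (V.LplusSet d) := by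
  have hAB : ∀ (i j : ℕ) (s : ℤ), 1 ≤ j → j ≤ p - 1 → -d j ≤ s →
      ⁅V.L ((p : ℤ) * (i : ℕ)), V.L ((j : ℤ) + (p : ℤ) * s)⁆ ∈
        Submodule.span ℂ (V.LplusSet d) := by
    intro i j s hj1 hj2 hs
    rw [V.bracket_Lr _ _ ⟨(i : ℤ), rfl⟩ (arith_ndvd hp s hj1 hj2)]
    have hidx : (p : ℤ) * (i : ℕ) + ((j : ℤ) + (p : ℤ) * s) =
        (j : ℤ) + (p : ℤ) * (((s + d j + (i : ℕ)).toNat : ℤ) - d j) := by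
      have : ((s + d j + (i : ℕ)).toNat : ℤ) = s + d j + (i : ℕ) := by omega
      rw [this]; ring
    rw [hidx]
    exact Submodule.smul_mem _ _ (Submodule.subset_span
      (Or.inr (Or.inl ⟨j, (s + d j + (i : ℕ)).toNat, hj1, hj2, rfl⟩)))
  rintro x hx y hy
  rcases hx with ⟨i, rfl⟩ | ⟨j, l, hj1, hj2, rfl⟩ | ⟨k, hk, rfl⟩
  · rcases hy with ⟨i', rfl⟩ | ⟨j', l', hj1', hj2', rfl⟩ | ⟨k', hk', rfl⟩
    · rw [V.bracket_LL _ _ ⟨(i : ℤ), rfl⟩ ⟨(i' : ℤ), rfl⟩]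
      have hidx : (p : ℤ) * (i : ℕ) + (p : ℤ) * (i' : ℕ) = (p : ℤ) * ((i + i' : ℕ) : ℤ) := by
        push_cast; ring
      rw [hidx]
      exact add_mem
        (Submodule.smul_mem _ _ (Submodule.subset_span (Or.inl ⟨i + i', rfl⟩)))
        (Submodule.smul_mem _ _ (Submodule.subset_span
          (Or.inr (Or.inr ⟨0, Nat.zero_le _, rfl⟩))))
    · exact hAB i j' ((l' : ℤ) - d j') hj1' hj2' (by omega)
    · rw [← lie_skew, V.central_C k' hk', neg_zero]; exact Submodule.zero_mem _
  · rcases hy with ⟨i', rfl⟩ | ⟨j', l', hj1', hj2', rfl⟩ | ⟨k', hk', rfl⟩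
    · rw [← lie_skew]
      exact neg_mem (hAB i' j ((l : ℤ) - d j) hj1 hj2 (by omega))
    · rw [V.bracket_rr _ _ (arith_ndvd hp _ hj1 hj2) (arith_ndvd hp _ hj1' hj2'),
        arith_emod_toNat hp _ hj1 hj2]
      exact Submodule.smul_mem _ _ (Submodule.subset_span
        (Or.inr (Or.inr ⟨min j (p - j), by omega, rfl⟩)))
    · rw [← lie_skew, V.central_C k' hk', neg_zero]; exact Submodule.zero_mem _
  · rw [V.central_C k hk]; exact Submodule.zero_mem _

lemma lplus_toSubmodule_eq (hp : 2 ≤ p) :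
    (V.Lplus d).toSubmodule = Submodule.span ℂ (V.LplusSet d) := by
  apply le_antisymm
  · let K : LieSubalgebra ℂ g :=
      { Submodule.span ℂ (V.LplusSet d) with
        lie_mem' := fun {x y} hx hy => by
          refine Submodule.span_induction₂
            (p := fun x y _ _ => ⁅x, y⁆ ∈ Submodule.span ℂ (V.LplusSet d))
            (fun a b ha hb => bracket_gen_mem V d hp a (by exact ha) b (by exact hb))
            (fun b _ => by rw [zero_lie]; exact Submodule.zero_mem _)
            (fun a _ => by rw [lie_zero]; exact Submodule.zero_mem _)
            (fun a b c _ _ _ h1 h2 => by rw [add_lie]; exact add_mem h1 h2)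
            (fun a b c _ _ _ h1 h2 => by rw [lie_add]; exact add_mem h1 h2)
            (fun r a b _ _ h1 => by rw [smul_lie]; exact Submodule.smul_mem _ _ h1)
            (fun r a b _ _ h1 => by rw [lie_smul]; exact Submodule.smul_mem _ _ h1)
            hx hy }
    intro x hx
    exact (LieSubalgebra.lieSpan_le (K := K)).mpr Submodule.subset_span hx
  · exact Submodule.span_le.mpr (fun x hx => LieSubalgebra.subset_lieSpan hx)

lemma mem_lplus_iff (hp : 2 ≤ p) {x : g} :
    x ∈ V.Lplus d ↔ x ∈ Submodule.span ℂ (V.LplusSet d) := by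
  rw [← lplus_toSubmodule_eq V d hp]; rfl

lemma rho_bracket (hp : 2 ≤ p) {x y : g} (hx : x ∈ V.Lplus d) (hy : y ∈ V.Lplus d) :
    rho V d ℓ0 θ η ⁅x, y⁆ = ⁅rho V d ℓ0 θ η x, rho V d ℓ0 θ η y⁆ := by
  rw [mem_lplus_iff V d hp] at hx hy
  refine Submodule.span_induction₂
    (p := fun x y _ _ =>
      rho V d ℓ0 θ η ⁅x, y⁆ = ⁅rho V d ℓ0 θ η x, rho V d ℓ0 θ η y⁆)
    (fun a b ha hb => rho_bracket_gen V d ℓ0 θ η hp a ha b hb)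
    (fun b _ => by simp)
    (fun a _ => by simp)
    (fun a b c _ _ _ h1 h2 => by
      rw [add_lie, map_add, map_add, add_lie, h1, h2])
    (fun a b c _ _ _ h1 h2 => by
      rw [lie_add, map_add, map_add, lie_add, h1, h2])
    (fun r a b _ _ h1 => by
      rw [smul_lie, map_smul, map_smul, h1, Ring.lie_def, Ring.lie_def, smul_sub,
        smul_mul_assoc, mul_smul_comm])
    (fun r a b _ _ h1 => by
      rw [lie_smul, map_smul, map_smul, h1, Ring.lie_def, Ring.lie_def, smul_sub,
        smul_mul_assoc, mul_smul_comm])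
    hx hy

end Main2


section Main3

open Polynomial UniversalEnvelopingAlgebra GapVirasoro

variable {p : ℕ} {g : Type} [LieRing g] [LieAlgebra ℂ g]
variable (V : GapVirasoro p g) (d : ℕ → ℤ) (ℓ0 : ℂ) (θ η : ℕ → ℂ)

/-- The representation as a Lie algebra homomorphism on the subalgebra. -/
noncomputable def rhoHom (hp : 2 ≤ p) :
    (V.Lplus d) →ₗ⁅ℂ⁆ Module.End ℂ (Polynomial ℂ) where
  toFun x := rho V d ℓ0 θ η x.1
  map_add' x y := map_add _ _ _
  map_smul' c x := map_smul _ _ _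
  map_lie' {x y} := rho_bracket V d ℓ0 θ η hp x.2 y.2

/-- The corresponding algebra homomorphism on the enveloping algebra. -/
noncomputable def Phi (hp : 2 ≤ p) :
    UniversalEnvelopingAlgebra ℂ (V.Lplus d) →ₐ[ℂ] Module.End ℂ (Polynomial ℂ) :=
  UniversalEnvelopingAlgebra.lift ℂ (rhoHom V d ℓ0 θ η hp)

lemma Phi_uel (hp : 2 ≤ p) (x : g) (hx : x ∈ V.Lplus d) :
    Phi V d ℓ0 θ η hp (V.uel d x hx) = rho V d ℓ0 θ η x := by
  rw [GapVirasoro.uel, Phi, UniversalEnvelopingAlgebra.lift_ι_apply]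
  rfl

/-- `L 0` as an element of the subalgebra. -/
noncomputable def zel : V.Lplus d :=
  ⟨V.L 0, by simpa using V.L_mul_mem_Lplus d 0⟩

/-- `L 0` inside the enveloping algebra. -/
noncomputable def zU : UniversalEnvelopingAlgebra ℂ (V.Lplus d) :=
  UniversalEnvelopingAlgebra.ι ℂ (zel V d)

lemma comm_U (x : V.Lplus d) (m : ℤ) (hbr : ⁅V.L 0, (x : g)⁆ = ((m : ℤ) : ℂ) • (x : g)) :
    (UniversalEnvelopingAlgebra.ι ℂ x) * zU V d =
      zU V d * UniversalEnvelopingAlgebra.ι ℂ x -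
        ((m : ℤ) : ℂ) • UniversalEnvelopingAlgebra.ι ℂ x := by
  have hb : ⁅zel V d, x⁆ = ((m : ℤ) : ℂ) • x := Subtype.ext hbr
  have h2 := (UniversalEnvelopingAlgebra.ι ℂ
    (L := (V.Lplus d : LieSubalgebra ℂ g))).map_lie (zel V d) x
  rw [hb, map_smul, Ring.lie_def] at h2
  unfold zU
  rw [h2, sub_sub_cancel]

lemma gen_comm (hp : 2 ≤ p) (v : g) (hv : v ∈ V.LplusSet d) :
    ∃ m : ℤ, ⁅V.L 0, v⁆ = ((m : ℤ) : ℂ) • v := by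
  rcases hv with ⟨i, rfl⟩ | ⟨j, l, hj1, hj2, rfl⟩ | ⟨k, hk, rfl⟩
  · refine ⟨(p : ℤ) * (i : ℕ), ?_⟩
    rw [V.bracket_LL 0 _ ⟨0, by ring⟩ ⟨(i : ℤ), rfl⟩]
    norm_num
  · refine ⟨(j : ℤ) + (p : ℤ) * ((l : ℤ) - d j), ?_⟩
    rw [V.bracket_Lr 0 _ ⟨0, by ring⟩ (arith_ndvd hp _ hj1 hj2)]
    norm_num
  · refine ⟨0, ?_⟩
    rw [← lie_skew, V.central_C k hk, neg_zero, Int.cast_zero, zero_smul]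

lemma exists_decomp (hp : 2 ≤ p)
    (J : Submodule (UniversalEnvelopingAlgebra ℂ (V.Lplus d))
          (UniversalEnvelopingAlgebra ℂ (V.Lplus d)))
    (hmem : ∀ v ∈ V.LplusSet d, ∀ (h : v ∈ V.Lplus d),
      v = V.L 0 ∨ ∃ c : ℂ,
        (UniversalEnvelopingAlgebra.ι ℂ (⟨v, h⟩ : V.Lplus d)) - algebraMap ℂ _ c ∈ J)
    (u : UniversalEnvelopingAlgebra ℂ (V.Lplus d)) :
    ∃ w ∈ J, ∃ f : Polynomial ℂ, u = w + Polynomial.aeval (zU V d) f := by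
  classical
  set W : Submodule ℂ (UniversalEnvelopingAlgebra ℂ (V.Lplus d)) :=
    J.restrictScalars ℂ ⊔ LinearMap.range ((Polynomial.aeval (zU V d) :
      Polynomial ℂ →ₐ[ℂ] (UniversalEnvelopingAlgebra ℂ (V.Lplus d))).toLinearMap) with hW
  have hJW : ∀ w ∈ J, w ∈ W := fun w hw =>
    Submodule.mem_sup_left (by exact hw)
  have hRW : ∀ f : Polynomial ℂ, Polynomial.aeval (zU V d) f ∈ W := fun f =>
    Submodule.mem_sup_right ⟨f, rfl⟩
  -- main closure property
  have key : ∀ u : (UniversalEnvelopingAlgebra ℂ (V.Lplus d)), ∀ w ∈ W, u * w ∈ W := by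
    intro u
    induction u using uea_induction with
    | halg r =>
      intro w hw
      rw [← Algebra.smul_def]
      exact W.smul_mem r hw
    | hι x =>
      have hx' : (x : g) ∈ Submodule.span ℂ (V.LplusSet d) :=
        (mem_lplus_iff V d hp).mp x.2
      have main : ∀ (v : g) (hv : v ∈ Submodule.span ℂ (V.LplusSet d)),
          ∀ (h : v ∈ V.Lplus d), ∀ w ∈ W,
            (UniversalEnvelopingAlgebra.ι ℂ (⟨v, h⟩ : V.Lplus d)) * w ∈ W := by
        intro v hv
        induction hv using Submodule.span_induction with
        | mem v hvs =>
          intro h w hw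
          obtain ⟨m, hm⟩ := gen_comm V d hp v hvs
          have hcomm := comm_U V d ⟨v, h⟩ m hm
          obtain ⟨w1, hw1, w2, ⟨f, rfl⟩, rfl⟩ := Submodule.mem_sup.mp hw
          rw [mul_add]
          refine W.add_mem (hJW _ ?_) ?_
          · rw [← smul_eq_mul]; exact J.smul_mem _ hw1
          · rcases hmem v hvs h with hL0 | ⟨c, hc⟩
            · have hxz : (⟨v, h⟩ : V.Lplus d) = zel V d := Subtype.ext hL0
              rw [hxz, AlgHom.toLinearMap_apply]
              show (zU V d) * Polynomial.aeval (zU V d) f ∈ W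
              have : (zU V d) * Polynomial.aeval (zU V d) f =
                  Polynomial.aeval (zU V d) (X * f) := by
                rw [map_mul, Polynomial.aeval_X]
              rw [this]
              exact hRW _
            · rw [AlgHom.toLinearMap_apply,
                mul_aeval_of_comm _ _ _ hcomm f]
              set gq := f.comp (X - Polynomial.C ((m : ℤ) : ℂ))
              have hsplit : Polynomial.aeval (zU V d) gq *
                  (UniversalEnvelopingAlgebra.ι ℂ (⟨v, h⟩ : V.Lplus d)) =
                  Polynomial.aeval (zU V d) gq *
                    ((UniversalEnvelopingAlgebra.ι ℂ (⟨v, h⟩ : V.Lplus d)) -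
                      algebraMap ℂ (UniversalEnvelopingAlgebra ℂ (V.Lplus d)) c) +
                  Polynomial.aeval (zU V d) (c • gq) := by
                rw [map_smul, mul_sub]
                have : Polynomial.aeval (zU V d) gq * algebraMap ℂ (UniversalEnvelopingAlgebra ℂ (V.Lplus d)) c =
                    c • Polynomial.aeval (zU V d) gq := by
                  rw [← Algebra.commutes c, ← Algebra.smul_def]
                rw [this]
                abel
              rw [hsplit]
              refine W.add_mem (hJW _ ?_) (hRW _)
              rw [← smul_eq_mul]; exact J.smul_mem _ hc
        | zero =>
          intro h w hw
          have : (⟨(0 : g), h⟩ : V.Lplus d) = 0 := Subtype.ext rfl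
          rw [this, map_zero, zero_mul]
          exact W.zero_mem
        | add v1 v2 hv1 hv2 ih1 ih2 =>
          intro h w hw
          have e : (⟨v1 + v2, h⟩ : V.Lplus d) =
              ⟨v1, (mem_lplus_iff V d hp).mpr hv1⟩ + ⟨v2, (mem_lplus_iff V d hp).mpr hv2⟩ :=
            Subtype.ext rfl
          rw [e, map_add, add_mul]
          exact W.add_mem (ih1 _ w hw) (ih2 _ w hw)
        | smul c v hv ih =>
          intro h w hw
          have e : (⟨c • v, h⟩ : V.Lplus d) = c • ⟨v, (mem_lplus_iff V d hp).mpr hv⟩ :=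
            Subtype.ext rfl
          rw [e, map_smul, smul_mul_assoc]
          exact W.smul_mem _ (ih _ w hw)
      intro w hw
      have := main (x : g) hx' x.2 w hw
      simpa using this
    | hmul a b ha hb =>
      intro w hw
      rw [mul_assoc]
      exact ha _ (hb w hw)
    | hadd a b ha hb =>
      intro w hw
      rw [add_mul]
      exact W.add_mem (ha w hw) (hb w hw)
  have h1W : (1 : (UniversalEnvelopingAlgebra ℂ (V.Lplus d))) ∈ W := by
    have : Polynomial.aeval (zU V d) (1 : Polynomial ℂ) = 1 := map_one _
    rw [← this]; exact hRW _
  have huW : u ∈ W := by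
    have := key u 1 h1W
    rwa [mul_one] at this
  obtain ⟨w1, hw1, w2, hw2, hsum⟩ := Submodule.mem_sup.mp huW
  obtain ⟨f, hf⟩ := hw2
  exact ⟨w1, hw1, f, by rw [← hsum, ← hf, AlgHom.toLinearMap_apply]⟩

lemma one_mem_of_aeval (N : Submodule (UniversalEnvelopingAlgebra ℂ (V.Lplus d))
      (UniversalEnvelopingAlgebra ℂ (V.Lplus d)))
    (a : UniversalEnvelopingAlgebra ℂ (V.Lplus d)) (r : ℤ) (hr : r ≠ 0) (θc : ℂ)
    (hθc : θc ≠ 0)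
    (hcomm : a * zU V d = zU V d * a - ((r : ℤ) : ℂ) • a)
    (haN : a - algebraMap ℂ _ θc ∈ N) :
    ∀ (n : ℕ) (f : Polynomial ℂ), f ≠ 0 → f.natDegree ≤ n →
      Polynomial.aeval (zU V d) f ∈ N → (1 : UniversalEnvelopingAlgebra ℂ (V.Lplus d)) ∈ N := by
  have habs : ∀ c : ℂ, c ≠ 0 → algebraMap ℂ (UniversalEnvelopingAlgebra ℂ (V.Lplus d)) c ∈ N →
      (1 : UniversalEnvelopingAlgebra ℂ (V.Lplus d)) ∈ N := by
    intro c hc hcN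
    have e : (algebraMap ℂ (UniversalEnvelopingAlgebra ℂ (V.Lplus d)) c⁻¹) *
        algebraMap ℂ (UniversalEnvelopingAlgebra ℂ (V.Lplus d)) c = 1 := by
      rw [← map_mul, inv_mul_cancel₀ hc, map_one]
    rw [← e, ← smul_eq_mul]
    exact N.smul_mem _ hcN
  have hstep : ∀ f : Polynomial ℂ, Polynomial.aeval (zU V d) f ∈ N →
      Polynomial.aeval (zU V d) (f.comp (X - Polynomial.C ((r : ℤ) : ℂ)) - f) ∈ N := by
    intro f hfN
    set gq := f.comp (X - Polynomial.C ((r : ℤ) : ℂ)) with hgq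
    have hga : a * Polynomial.aeval (zU V d) f = Polynomial.aeval (zU V d) gq * a :=
      mul_aeval_of_comm a (zU V d) ((r : ℤ) : ℂ) hcomm f
    have h1 : (a - algebraMap ℂ _ θc) * Polynomial.aeval (zU V d) f ∈ N := by
      rw [← smul_eq_mul]; exact N.smul_mem _ hfN
    have h2 : Polynomial.aeval (zU V d) gq * (a - algebraMap ℂ _ θc) ∈ N := by
      rw [← smul_eq_mul]; exact N.smul_mem _ haN
    have h3 : θc • Polynomial.aeval (zU V d) (gq - f) =
        (a - algebraMap ℂ _ θc) * Polynomial.aeval (zU V d) f -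
          Polynomial.aeval (zU V d) gq * (a - algebraMap ℂ _ θc) := by
      have e1 : algebraMap ℂ (UniversalEnvelopingAlgebra ℂ (V.Lplus d)) θc *
          Polynomial.aeval (zU V d) f = θc • Polynomial.aeval (zU V d) f :=
        (Algebra.smul_def _ _).symm
      have e2 : Polynomial.aeval (zU V d) gq *
          algebraMap ℂ (UniversalEnvelopingAlgebra ℂ (V.Lplus d)) θc =
          θc • Polynomial.aeval (zU V d) gq := by
        rw [← Algebra.commutes θc, ← Algebra.smul_def]
      rw [map_sub, sub_mul, mul_sub, hga, e1, e2, smul_sub]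
      abel
    have h4 : θc • Polynomial.aeval (zU V d) (gq - f) ∈ N := by
      rw [h3]; exact N.sub_mem h1 h2
    have h5 : Polynomial.aeval (zU V d) (gq - f) =
        algebraMap ℂ (UniversalEnvelopingAlgebra ℂ (V.Lplus d)) θc⁻¹ *
          (θc • Polynomial.aeval (zU V d) (gq - f)) := by
      rw [← Algebra.smul_def, smul_smul, inv_mul_cancel₀ hθc, one_smul]
    rw [h5, ← smul_eq_mul]
    exact N.smul_mem _ h4
  intro n
  induction n with
  | zero =>
    intro f hf hdeg hfN
    have h0 : f.natDegree = 0 := Nat.le_zero.mp hdeg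
    have hfc : f = C (f.coeff 0) := Polynomial.eq_C_of_natDegree_eq_zero h0
    have hc0 : f.coeff 0 ≠ 0 := fun hc => hf (by rw [hfc, hc, map_zero])
    rw [hfc, Polynomial.aeval_C] at hfN
    exact habs _ hc0 hfN
  | succ n ih =>
    intro f hf hdeg hfN
    by_cases h0 : f.natDegree = 0
    · have hfc : f = C (f.coeff 0) := Polynomial.eq_C_of_natDegree_eq_zero h0
      have hc0 : f.coeff 0 ≠ 0 := fun hc => hf (by rw [hfc, hc, map_zero])
      rw [hfc, Polynomial.aeval_C] at hfN
      exact habs _ hc0 hfN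
    · set gq := f.comp (X - Polynomial.C ((r : ℤ) : ℂ)) with hgq
      have key := hstep f hfN
      by_cases hzero : gq - f = 0
      · exfalso
        have hfc : f.comp (X - Polynomial.C ((r : ℤ) : ℂ)) = f := by
          have := sub_eq_zero.mp hzero
          rw [← hgq]; exact this
        have heval : ∀ x : ℂ, f.eval (x - ((r : ℤ) : ℂ)) = f.eval x := by
          intro x
          conv_rhs => rw [← hfc]
          rw [Polynomial.eval_comp, Polynomial.eval_sub, Polynomial.eval_X, Polynomial.eval_C]
        have hk : ∀ k : ℕ, f.eval (-(k : ℂ) * ((r : ℤ) : ℂ)) = f.eval 0 := by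
          intro k
          induction k with
          | zero => norm_num
          | succ k ihk =>
            have h2 : (-((k + 1 : ℕ) : ℂ)) * ((r : ℤ) : ℂ) =
                (-(k : ℂ) * ((r : ℤ) : ℂ)) - ((r : ℤ) : ℂ) := by push_cast; ring
            rw [h2, heval, ihk]
        set q := f - Polynomial.C (f.eval 0) with hqdef
        have hq0 : q ≠ 0 := by
          intro hq
          exact h0 (by rw [sub_eq_zero.mp hq]; exact Polynomial.natDegree_C _)
        have hrC : ((r : ℤ) : ℂ) ≠ 0 := Int.cast_ne_zero.mpr hr
        have hinf : {x : ℂ | q.IsRoot x}.Infinite := by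
          apply Set.Infinite.mono
            (s := Set.range (fun k : ℕ => -(k : ℂ) * ((r : ℤ) : ℂ)))
          · rintro _ ⟨k, rfl⟩
            show q.IsRoot _
            rw [hqdef, Polynomial.IsRoot, Polynomial.eval_sub, Polynomial.eval_C, hk k, sub_self]
          · apply Set.infinite_range_of_injective
            intro k1 k2 hk12
            have h' : (k1 : ℂ) = (k2 : ℂ) := neg_inj.mp (mul_right_cancel₀ hrC hk12)
            exact_mod_cast h'
        exact hq0 (Polynomial.eq_zero_of_infinite_isRoot q hinf)
      · have hgne : gq ≠ 0 := by
          intro hg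
          apply hf
          have : (f.comp (X - Polynomial.C ((r : ℤ) : ℂ))).comp (X + Polynomial.C ((r : ℤ) : ℂ)) = f := by
            rw [Polynomial.comp_assoc]
            simp [Polynomial.sub_comp, Polynomial.X_comp, Polynomial.C_comp]
          rw [← this, ← hgq, hg, Polynomial.zero_comp]
        have hdeg_g : gq.natDegree = f.natDegree := by
          rw [hgq, Polynomial.natDegree_comp, Polynomial.natDegree_X_sub_C, mul_one]
        have hf0 : f ≠ 0 := hf
        have hdeq : gq.degree = f.degree := by
          rw [Polynomial.degree_eq_natDegree hgne, Polynomial.degree_eq_natDegree hf0, hdeg_g]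
        have hlc : gq.leadingCoeff = f.leadingCoeff := by
          rw [hgq, Polynomial.leadingCoeff_comp
            (by rw [Polynomial.natDegree_X_sub_C]; exact one_ne_zero)]
          rw [(Polynomial.monic_X_sub_C ((r : ℤ) : ℂ)).leadingCoeff, one_pow, mul_one]
        have hdlt : (gq - f).natDegree < f.natDegree := by
          have := Polynomial.degree_sub_lt hdeq hgne hlc
          rw [hdeq] at this
          exact Polynomial.natDegree_lt_natDegree hzero this
        exact ih (gq - f) hzero (by omega) key

end Main3

end Aux

/-- for `d` with `S = {i : d_i ≤ 0}` nonempty and nonzero scalars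
`θ_i (i ∈ S)`, `η_r (r ∈ S̄)`, the quotient of `U(𝔏⁺(d))` by the indicated left ideal
is a simple `𝔏⁺(d)`-module (equivalently, a simple left `U(𝔏⁺(d))`-module). -/
theorem gapVirasoro_R_module_simple
    (p : ℕ) (hp : 2 ≤ p) (g : Type) [LieRing g] [LieAlgebra ℂ g] (V : GapVirasoro p g)
    (d : ℕ → ℤ) (ℓ0 : ℂ) (θ η : ℕ → ℂ)
    -- `S = {i : 1 ≤ i ≤ p-1, d_i ≤ 0}` is nonempty
    (hSne : ∃ i : ℕ, 1 ≤ i ∧ i ≤ p - 1 ∧ d i ≤ 0)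
    -- the `θ_i` (for `i ∈ S`) are nonzero
    (hθ : ∀ i : ℕ, 1 ≤ i → i ≤ p - 1 → d i ≤ 0 → θ i ≠ 0)
    -- the `η_r` (for `r ∈ S̄`) are nonzero
    (hη : ∀ r : ℕ, 1 ≤ r → r ≤ p - 1 → 0 < d r → η r ≠ 0) :
    IsSimpleModule (UniversalEnvelopingAlgebra ℂ (V.Lplus d))
      ((UniversalEnvelopingAlgebra ℂ (V.Lplus d)) ⧸
        (Submodule.span (UniversalEnvelopingAlgebra ℂ (V.Lplus d))
          {x : UniversalEnvelopingAlgebra ℂ (V.Lplus d) |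
            -- L_{i−p·d_i} − θ_i for i ∈ S
            (∃ (i : ℕ) (hi1 : 1 ≤ i) (hi2 : i ≤ p - 1), d i ≤ 0 ∧
              x = V.uel d (V.L ((i : ℤ) - (p : ℤ) * d i))
                    (by simpa [mul_neg, sub_eq_add_neg] using
                      V.L_shift_mem_Lplus' d i (-(d i)) hi1 hi2 le_rfl) -
                  algebraMap ℂ _ (θ i)) ∨
            -- L_{r−p·d_r} − η_r for r ∈ S̄
            (∃ (r : ℕ) (hr1 : 1 ≤ r) (hr2 : r ≤ p - 1), 0 < d r ∧
              x = V.uel d (V.L ((r : ℤ) - (p : ℤ) * d r))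
                    (by simpa [mul_neg, sub_eq_add_neg] using
                      V.L_shift_mem_Lplus' d r (-(d r)) hr1 hr2 le_rfl) -
                  algebraMap ℂ _ (η r)) ∨
            -- L_{pj} for j ∈ ℤ₊
            (∃ j : ℕ, 1 ≤ j ∧ x = V.uel d (V.L ((p : ℤ) * j)) (V.L_mul_mem_Lplus d j)) ∨
            -- L_{t+ps} for 1 ≤ t ≤ p−1 and s > −d_t
            (∃ (t : ℕ) (ht1 : 1 ≤ t) (ht2 : t ≤ p - 1) (s : ℤ) (hs : -d t < s),
              x = V.uel d (V.L ((t : ℤ) + (p : ℤ) * s))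
                    (V.L_shift_mem_Lplus' d t s ht1 ht2 hs.le)) ∨
            -- C₀ − p²ℓ₀
            x = V.uel d (V.C 0) (V.C_mem_Lplus d 0 (Nat.zero_le _)) -
                algebraMap ℂ _ ((p : ℂ) ^ 2 * ℓ0) ∨
            -- C₁, …, C_⌊p/2⌋
            (∃ (j : ℕ) (_ : 1 ≤ j) (hj : j ≤ p / 2),
              x = V.uel d (V.C j) (V.C_mem_Lplus d j hj))})) := by
  classical
  rw [isSimpleModule_iff_isCoatom]
  constructor
  · -- the ideal is proper
    intro htop
    have hall : ∀ u ∈ (⊤ : Submodule (UniversalEnvelopingAlgebra ℂ (V.Lplus d))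
        (UniversalEnvelopingAlgebra ℂ (V.Lplus d))), Phi V d ℓ0 θ η hp u (1 : Polynomial ℂ) = 0 := by
      rw [← htop]
      intro u hu
      induction hu using Submodule.span_induction with
      | mem x hx =>
        rcases hx with ⟨i, hi1, hi2, hdi, rfl⟩ | ⟨r, hr1, hr2, hdr, rfl⟩ | ⟨j, hj1, rfl⟩ |
          ⟨t, ht1, ht2, s, hs, rfl⟩ | rfl | ⟨j, hj1, hj2, rfl⟩
        · rw [map_sub, LinearMap.sub_apply, Phi_uel]
          have hidx : (i : ℤ) - (p : ℤ) * d i = (i : ℤ) + (p : ℤ) * (-d i) := by ring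
          rw [hidx, rho_Lr V d ℓ0 θ η hp i (-d i) hi1 hi2, if_pos rfl, AlgHom.commutes,
            Module.algebraMap_end_apply, LinearMap.smul_apply, shiftE_apply,
            Polynomial.one_comp, cval, if_pos hdi, sub_self]
        · rw [map_sub, LinearMap.sub_apply, Phi_uel]
          have hidx : (r : ℤ) - (p : ℤ) * d r = (r : ℤ) + (p : ℤ) * (-d r) := by ring
          rw [hidx, rho_Lr V d ℓ0 θ η hp r (-d r) hr1 hr2, if_pos rfl, AlgHom.commutes,
            Module.algebraMap_end_apply, LinearMap.smul_apply, shiftE_apply,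
            Polynomial.one_comp, cval, if_neg (by omega), sub_self]
        · rw [Phi_uel, rho_Lpi V d ℓ0 θ η hp j hj1]
          simp
        · rw [Phi_uel, rho_Lr V d ℓ0 θ η hp t s ht1 ht2, if_neg (by omega)]
          simp
        · rw [map_sub, LinearMap.sub_apply, Phi_uel, rho_C0, AlgHom.commutes,
            Module.algebraMap_end_apply, LinearMap.smul_apply, Module.End.one_apply, sub_self]
        · rw [Phi_uel, rho_Ck V d ℓ0 θ η j hj1 hj2]
          simp
      | zero => simp
      | add a b _ _ ha hb => rw [map_add, LinearMap.add_apply, ha, hb, add_zero]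
      | smul a x _ hx => rw [smul_eq_mul, map_mul, Module.End.mul_apply, hx, map_zero]
    have h10 := hall 1 Submodule.mem_top
    rw [show Phi V d ℓ0 θ η hp 1 = 1 from map_one _, Module.End.one_apply] at h10
    exact one_ne_zero h10
  · -- maximality
    intro N hlt
    have hJN := hlt.le
    obtain ⟨u, huN, huJ⟩ := SetLike.exists_of_lt hlt
    -- generator description needed for the decomposition lemma
    have hmem : ∀ v ∈ V.LplusSet d, ∀ (h : v ∈ V.Lplus d),
        v = V.L 0 ∨ ∃ c : ℂ,
          (UniversalEnvelopingAlgebra.ι ℂ (⟨v, h⟩ : V.Lplus d)) -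
            algebraMap ℂ (UniversalEnvelopingAlgebra ℂ (V.Lplus d)) c ∈
              Submodule.span (UniversalEnvelopingAlgebra ℂ (V.Lplus d))
                {x : UniversalEnvelopingAlgebra ℂ (V.Lplus d) |
                  (∃ (i : ℕ) (hi1 : 1 ≤ i) (hi2 : i ≤ p - 1), d i ≤ 0 ∧
                    x = V.uel d (V.L ((i : ℤ) - (p : ℤ) * d i))
                          (by simpa [mul_neg, sub_eq_add_neg] using
                            V.L_shift_mem_Lplus' d i (-(d i)) hi1 hi2 le_rfl) -
                        algebraMap ℂ _ (θ i)) ∨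
                  (∃ (r : ℕ) (hr1 : 1 ≤ r) (hr2 : r ≤ p - 1), 0 < d r ∧
                    x = V.uel d (V.L ((r : ℤ) - (p : ℤ) * d r))
                          (by simpa [mul_neg, sub_eq_add_neg] using
                            V.L_shift_mem_Lplus' d r (-(d r)) hr1 hr2 le_rfl) -
                        algebraMap ℂ _ (η r)) ∨
                  (∃ j : ℕ, 1 ≤ j ∧ x = V.uel d (V.L ((p : ℤ) * j)) (V.L_mul_mem_Lplus d j)) ∨
                  (∃ (t : ℕ) (ht1 : 1 ≤ t) (ht2 : t ≤ p - 1) (s : ℤ) (hs : -d t < s),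
                    x = V.uel d (V.L ((t : ℤ) + (p : ℤ) * s))
                          (V.L_shift_mem_Lplus' d t s ht1 ht2 hs.le)) ∨
                  x = V.uel d (V.C 0) (V.C_mem_Lplus d 0 (Nat.zero_le _)) -
                      algebraMap ℂ _ ((p : ℂ) ^ 2 * ℓ0) ∨
                  (∃ (j : ℕ) (_ : 1 ≤ j) (hj : j ≤ p / 2),
                    x = V.uel d (V.C j) (V.C_mem_Lplus d j hj))} := by
      intro v hv h
      rcases hv with ⟨i, rfl⟩ | ⟨j, l, hj1, hj2, rfl⟩ | ⟨k, hk, rfl⟩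
      · rcases Nat.eq_zero_or_pos i with hi | hi
        · left; subst hi; norm_num
        · right
          refine ⟨0, ?_⟩
          rw [map_zero, sub_zero]
          exact Submodule.subset_span (Or.inr (Or.inr (Or.inl ⟨i, hi, rfl⟩)))
      · rcases Nat.eq_zero_or_pos l with hl | hl
        · right
          subst hl
          have hidx : (j : ℤ) + (p : ℤ) * (((0 : ℕ) : ℤ) - d j) = (j : ℤ) - (p : ℤ) * d j := by
            push_cast; ring
          have hv2 : V.L ((j : ℤ) + (p : ℤ) * (((0 : ℕ) : ℤ) - d j)) =
              V.L ((j : ℤ) - (p : ℤ) * d j) := by rw [hidx]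
          have e : (⟨V.L ((j : ℤ) + (p : ℤ) * (((0 : ℕ) : ℤ) - d j)), h⟩ : V.Lplus d) =
              ⟨V.L ((j : ℤ) - (p : ℤ) * d j), hv2 ▸ h⟩ := Subtype.ext hv2
          by_cases hdj : d j ≤ 0
          · refine ⟨θ j, ?_⟩
            rw [e]
            exact Submodule.subset_span (Or.inl ⟨j, hj1, hj2, hdj, rfl⟩)
          · refine ⟨η j, ?_⟩
            rw [e]
            exact Submodule.subset_span (Or.inr (Or.inl ⟨j, hj1, hj2, by omega, rfl⟩))
        · right
          refine ⟨0, ?_⟩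
          rw [map_zero, sub_zero]
          exact Submodule.subset_span (Or.inr (Or.inr (Or.inr (Or.inl
            ⟨j, hj1, hj2, (l : ℤ) - d j, by omega, rfl⟩))))
      · rcases Nat.eq_zero_or_pos k with hk0 | hk0
        · right
          subst hk0
          exact ⟨(p : ℂ) ^ 2 * ℓ0,
            Submodule.subset_span (Or.inr (Or.inr (Or.inr (Or.inr (Or.inl rfl)))))⟩
        · right
          refine ⟨0, ?_⟩
          rw [map_zero, sub_zero]
          exact Submodule.subset_span (Or.inr (Or.inr (Or.inr (Or.inr (Or.inr
            ⟨k, hk0, hk, rfl⟩)))))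
    obtain ⟨w, hwJ, f, hde⟩ := exists_decomp V d hp _ hmem u
    have hfN : Polynomial.aeval (zU V d) f ∈ N := by
      have := N.sub_mem huN (hJN hwJ)
      rw [hde] at this
      simpa using this
    have hf0 : f ≠ 0 := by
      rintro rfl
      rw [map_zero, add_zero] at hde
      exact huJ (hde ▸ hwJ)
    -- the distinguished Whittaker generator
    obtain ⟨i0, hi01, hi02, hdi0⟩ := hSne
    set r0 : ℤ := (i0 : ℤ) - (p : ℤ) * d i0 with hr0def
    have hx0 : V.L r0 ∈ V.Lplus d := by
      rw [hr0def]
      simpa [mul_neg, sub_eq_add_neg] using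
        V.L_shift_mem_Lplus' d i0 (-(d i0)) hi01 hi02 le_rfl
    have hr0 : r0 ≠ 0 := by
      have hm : (p : ℤ) * d i0 ≤ 0 :=
        mul_nonpos_of_nonneg_of_nonpos (by positivity) hdi0
      rw [hr0def]
      omega
    have hnd0 : ¬ (p : ℤ) ∣ r0 := by
      have := arith_ndvd hp (-(d i0)) hi01 hi02
      rw [hr0def]
      rw [sub_eq_add_neg, ← mul_neg]
      exact this
    have hbr0 : ⁅V.L 0, V.L r0⁆ = ((r0 : ℤ) : ℂ) • V.L r0 := by
      rw [V.bracket_Lr 0 r0 ⟨0, by ring⟩ hnd0, zero_add]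
    have hcomm := comm_U V d ⟨V.L r0, hx0⟩ r0 hbr0
    have haJ : (UniversalEnvelopingAlgebra.ι ℂ (⟨V.L r0, hx0⟩ : V.Lplus d)) -
        algebraMap ℂ (UniversalEnvelopingAlgebra ℂ (V.Lplus d)) (θ i0) ∈ N := by
      apply hJN
      exact Submodule.subset_span (Or.inl ⟨i0, hi01, hi02, hdi0, rfl⟩)
    have h1N := one_mem_of_aeval V d N _ r0 hr0 (θ i0) (hθ i0 hi01 hi02 hdi0)
      hcomm haJ f.natDegree f hf0 le_rfl hfN
    refine Submodule.eq_top_iff'.mpr fun x => ?_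
    have := N.smul_mem x h1N
    simpa using this
end

section
/- Let 𝔏⁺ = span{L_m : m > 0} and 𝒞 = span{C_0,…,C_⌊p/2⌋}, so that 𝔏⁺ ⊕ 𝒞 is a Lie subalgebra of 𝔏. Every Lie algebra homomorphism φ : 𝔏⁺ ⊕ 𝒞 → ℂ (where ℂ is the one-dimensional abelian Lie algebra) satisfies φ(L_i) = 0 for every integer i with i > p and i ≠ 2p. -/
/-- The Lie subalgebra `𝔏⁺ ⊕ 𝒞 = span{L_m : m > 0} ⊕ span{C_0,…,C_⌊p/2⌋}` of `𝔏`. -/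
def GapVirasoro.Bplus {p : ℕ} {g : Type} [LieRing g] [LieAlgebra ℂ g]
    (V : GapVirasoro p g) : LieSubalgebra ℂ g :=
  LieSubalgebra.lieSpan ℂ g
    {x | (∃ m : ℤ, 0 < m ∧ x = V.L m) ∨ (∃ i : ℕ, i ≤ p / 2 ∧ x = V.C i)}

attribute [local instance 100] LieRing.ofAssociativeRing

/-- every Lie algebra homomorphism `φ : 𝔏⁺ ⊕ 𝒞 → ℂ` (with `ℂ` abelian)
vanishes on `L_i` for every `i > p` with `i ≠ 2p`. -/
theorem gapVirasoro_whittaker_character_vanishes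
    (p : ℕ) (hp : 2 ≤ p) (g : Type) [LieRing g] [LieAlgebra ℂ g] (V : GapVirasoro p g)
    (φ : V.Bplus →ₗ⁅ℂ⁆ ℂ) :
    ∀ i : ℤ, (p : ℤ) < i → i ≠ 2 * p → ∀ x : V.Bplus, (x : g) = V.L i → φ x = 0 := by

  intro i hpi h2p x hx
  have ha : V.L p ∈ V.Bplus :=
    LieSubalgebra.subset_lieSpan (Or.inl ⟨(p : ℤ), by omega, rfl⟩)
  have hb : V.L (i - p) ∈ V.Bplus :=
    LieSubalgebra.subset_lieSpan (Or.inl ⟨i - p, by omega, rfl⟩)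
  set a : V.Bplus := ⟨V.L p, ha⟩
  set b : V.Bplus := ⟨V.L (i - p), hb⟩
  obtain ⟨c, hc0, hbr⟩ : ∃ c : ℂ, c ≠ 0 ∧ ⁅(a : g), (b : g)⁆ = c • V.L i := by
    by_cases hdvd : (p : ℤ) ∣ i
    · refine ⟨((i - 2 * p : ℤ) : ℂ), ?_, ?_⟩
      · exact_mod_cast (by omega : (i - 2 * p : ℤ) ≠ 0)
      · have h := V.bracket_LL p (i - p) dvd_rfl (dvd_sub hdvd dvd_rfl)
        have h1 : (p : ℤ) + (i - p) = i := by ring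
        rw [h1] at h
        rw [if_neg (by omega : ¬ i = 0)] at h
        rw [h, zero_smul, add_zero]
        push_cast
        ring_nf
    · refine ⟨((i - p : ℤ) : ℂ), ?_, ?_⟩
      · exact_mod_cast (by omega : (i - p : ℤ) ≠ 0)
      · have hnd : ¬ (p : ℤ) ∣ (i - p) := fun h =>
          hdvd (by simpa using dvd_add h (dvd_refl (p : ℤ)))
        have h := V.bracket_Lr p (i - p) dvd_rfl hnd
        have h1 : (p : ℤ) + (i - p) = i := by ring
        rw [h1] at h
        exact h
  have key : ⁅a, b⁆ = c • x := by
    apply Subtype.ext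
    rw [LieSubalgebra.coe_bracket, hbr, ← hx]; rfl
  have hφ : c • φ x = 0 := by
    rw [← map_smul, ← key, LieHom.map_lie]
    simp [Ring.lie_def, mul_comm]
  exact (smul_eq_zero.mp hφ).resolve_left hc0
end
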